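/- arXiv:2003.05515 — 5 statements merged into one kernel-verified Lean document; each statement's English description precedes it below -/
import Mathlib

section
/- Let h(t) = e^{C/t} F(t) where F(t) = P(τ ≤ t) satisfies lim_{t→0+} t ln F(t) = −C < 0. For any p > −1 and q > −1, the ratio of ∫₀^∞ s^p e^{−√(λC)(s+1/s)} h(√(C/λ) s) ds to ∫₀^∞ s^q e^{−√(λC)(s+1/s)} h(√(C/λ) s) ds tends to 1 as λ → ∞. -/
/-!
With `M = √(λC)` and `h(t) = e^{C/t} F(t)`, the integrand becomes `s^r e^{-Ms} F(Cs/M)`.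
Since `F(t) = e^{-(C + o(1))/t}` as `t → 0⁺`, this weight behaves like `e^{-M(s + 1/s) + o(M)}`,
so its mass concentrates at `s = 1`, where `s^p` and `s^q` agree. Quantitatively, with
`a = δ²/16`: the bound `F(t) ≤ K e^{-C(1-a)/t}` (valid for all `t > 0` because `F ≤ 1`) makes
the part `|s - 1| > δ` of size `O(e^{-(2+4a)M})`, while the interval `[1, 1 + a]` alone
contributes at least a constant times `e^{-(2+2a)M}`.
-/

open MeasureTheory ProbabilityTheory Filter Set Real Topology

theorem tendsto_div_nhds_one_of_le_one_add {α : Type*} {l : Filter α} {f g : α → ℝ}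
    (hfg : ∀ ε > 0, ∀ᶠ x in l, f x ≤ (1 + ε) * g x)
    (hgf : ∀ ε > 0, ∀ᶠ x in l, g x ≤ (1 + ε) * f x) (hg : ∀ᶠ x in l, 0 < g x) :
    Tendsto (fun x => f x / g x) l (𝓝 1) := by
  rw [Metric.tendsto_nhds]
  intro ε hε
  filter_upwards [hfg (ε / 2) (by positivity), hgf ε hε, hg] with x hle hge hg
  have hf : 0 < f x := by nlinarith
  rw [Real.dist_eq, abs_sub_lt_iff, sub_lt_iff_lt_add, sub_lt_comm, div_lt_iff₀ hg,
    lt_div_iff₀ hg]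
  refine ⟨by nlinarith, ?_⟩
  rcases le_or_gt ε 1 with hε1 | hε1
  · nlinarith [mul_le_mul_of_nonneg_left hge (by linarith : 0 ≤ 1 - ε),
      mul_pos (mul_pos hε hε) hf]
  · nlinarith

theorem setIntegral_le_mul_add_setIntegral_sdiff {α : Type*} [MeasurableSpace α] {μ : Measure α}
    {f g : α → ℝ} {s k : Set α} {c : ℝ} (hk : MeasurableSet k) (hks : k ⊆ s)
    (hf : IntegrableOn f s μ) (hg : IntegrableOn g s μ) (hg0 : 0 ≤ᵐ[μ.restrict s] g) (hc : 0 ≤ c)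
    (hfg : ∀ x ∈ k, f x ≤ c * g x) :
    ∫ x in s, f x ∂μ ≤ c * ∫ x in s, g x ∂μ + ∫ x in s \ k, f x ∂μ := by
  have hfk : ∫ x in k, f x ∂μ ≤ c * ∫ x in k, g x ∂μ := by
    rw [← integral_const_mul]
    exact setIntegral_mono_on (hf.mono_set hks) ((hg.mono_set hks).const_mul c) hk hfg
  have hgk : ∫ x in k, g x ∂μ ≤ ∫ x in s, g x ∂μ := setIntegral_mono_set hg hg0 hks.eventuallyLE
  rw [setIntegral_sdiff hk hf hks]
  nlinarith

theorem eventually_exp_le_abs_le_exp_of_tendsto_mul_log {F : ℝ → ℝ} {C ε : ℝ}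
    (hlog : Tendsto (fun t => t * log (F t)) (𝓝[>] 0) (𝓝 (-C))) (hε : 0 < ε) (hεC : ε < C) :
    ∀ᶠ t in 𝓝[>] 0, exp (-(C + ε) / t) ≤ |F t| ∧ |F t| ≤ exp (-(C - ε) / t) := by
  have hband : ∀ᶠ t in 𝓝[>] 0, t * log (F t) ∈ Ioo (-C - ε) (-C + ε) :=
    hlog (Ioo_mem_nhds (by linarith) (by linarith))
  filter_upwards [hband, self_mem_nhdsWithin] with t ⟨hlo, hhi⟩ (ht : 0 < t)
  have hF : F t ≠ 0 := by
    rintro h0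
    simp only [h0, log_zero, mul_zero] at hhi
    linarith
  rw [← exp_log_eq_abs hF, exp_le_exp, exp_le_exp, ← mul_div_cancel_left₀ (log (F t)) ht.ne']
  constructor <;> gcongr <;> linarith

theorem exists_le_mul_exp_of_tendsto_mul_log {F : ℝ → ℝ} {C ε : ℝ} (hF1 : ∀ t, F t ≤ 1)
    (hlog : Tendsto (fun t => t * log (F t)) (𝓝[>] 0) (𝓝 (-C))) (hε : 0 < ε) (hεC : ε < C) :
    ∃ K > 0, ∀ t > 0, F t ≤ K * exp (-(C - ε) / t) := by
  obtain ⟨t₀, ht₀, hsmall⟩ := (nhdsGT_basis (0 : ℝ)).eventually_iff.mp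
    (eventually_exp_le_abs_le_exp_of_tendsto_mul_log hlog hε hεC)
  refine ⟨exp ((C - ε) / t₀), exp_pos _, fun t ht => ?_⟩
  rcases lt_or_ge t t₀ with hlt | hge
  · calc F t ≤ |F t| := le_abs_self _
      _ ≤ exp (-(C - ε) / t) := (hsmall ⟨ht, hlt⟩).2
      _ ≤ exp ((C - ε) / t₀) * exp (-(C - ε) / t) :=
        le_mul_of_one_le_left (exp_pos _).le (one_le_exp (by bound))
  · calc F t ≤ 1 := hF1 t
      _ = exp ((C - ε) / t₀) * exp (-(C - ε) / t₀) := by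
        rw [← exp_add, neg_div, add_neg_cancel, exp_zero]
      _ ≤ exp ((C - ε) / t₀) * exp (-(C - ε) / t) := by
        gcongr exp ((C - ε) / t₀) * exp ?_
        rw [neg_div, neg_div, neg_le_neg_iff]
        gcongr

theorem two_add_sq_div_four_le_add_div {δ s : ℝ} (hδ : 0 < δ) (hδ' : δ ≤ 1 / 2) (hs : 0 < s)
    (hout : s ∉ Icc (1 - δ) (1 + δ)) :
    2 + δ ^ 2 / 4 ≤ s + (1 - δ ^ 2 / 16) / s := by
  have hquad : 0 ≤ s ^ 2 - (2 + δ ^ 2 / 4) * s + (1 - δ ^ 2 / 16) := by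
    rcases le_or_gt s (1 - δ) with hlo | hlo
    · nlinarith [mul_nonneg (by linarith : (0:ℝ) ≤ 1 - δ - s)
        (by nlinarith : (0:ℝ) ≤ (2 + δ ^ 2 / 4) - s - (1 - δ))]
    · have hhi : 1 + δ < s := by
        by_contra! h
        exact hout ⟨hlo.le, h⟩
      nlinarith [mul_nonneg (by linarith : (0:ℝ) ≤ s - (1 + δ))
        (by nlinarith : (0:ℝ) ≤ s + (1 + δ) - (2 + δ ^ 2 / 4))]
  rw [← sub_nonneg]
  have : s + (1 - δ ^ 2 / 16) / s - (2 + δ ^ 2 / 4)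
      = (s ^ 2 - (2 + δ ^ 2 / 4) * s + (1 - δ ^ 2 / 16)) / s := by field_simp; ring
  rw [this]
  positivity

theorem min_one_rpow_le_rpow {s b r : ℝ} (hs : 1 ≤ s) (hsb : s ≤ b) : min 1 (b ^ r) ≤ s ^ r := by
  rcases le_total 0 r with hr | hr
  · exact (min_le_left _ _).trans (one_le_rpow hs hr)
  · exact (min_le_right _ _).trans (rpow_le_rpow_of_nonpos (by linarith) hsb hr)

theorem integrableOn_rpow_mul_exp_neg_mul {r M : ℝ} (hr : -1 < r) (hM : 0 < M) :
    IntegrableOn (fun s : ℝ => s ^ r * exp (-(M * s))) (Ioi 0) := by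
  simpa only [rpow_one, neg_mul] using integrableOn_rpow_mul_exp_neg_mul_rpow hr one_pos hM

noncomputable def laplaceWeight (F : ℝ → ℝ) (C M s : ℝ) : ℝ := exp (-(M * s)) * F (C / M * s)

section LaplaceWeight

variable {F : ℝ → ℝ} {C : ℝ}

theorem exp_mul_apply_eq_laplaceWeight {h : ℝ → ℝ} {M s : ℝ}
    (hh : ∀ t, 0 < t → h t = exp (C / t) * F t) (hC : 0 < C) (hM : 0 < M) (hs : 0 < s) :
    exp (-M * (s + 1 / s)) * h (C / M * s) = laplaceWeight F C M s := by
  rw [hh _ (by positivity), laplaceWeight, ← mul_assoc, ← exp_add]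
  congr 2
  field_simp
  ring

theorem laplaceWeight_nonneg (hF0 : ∀ t, 0 ≤ F t) (M s : ℝ) : 0 ≤ laplaceWeight F C M s :=
  mul_nonneg (exp_pos _).le (hF0 _)

theorem laplaceWeight_le_exp (hF1 : ∀ t, F t ≤ 1) (M s : ℝ) :
    laplaceWeight F C M s ≤ exp (-(M * s)) :=
  mul_le_of_le_one_right (exp_pos _).le (hF1 _)

theorem integrableOn_rpow_mul_laplaceWeight (hF0 : ∀ t, 0 ≤ F t) (hF1 : ∀ t, F t ≤ 1)
    (hFm : Measurable F) {r M : ℝ} (hr : -1 < r) (hM : 0 < M) :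
    IntegrableOn (fun s => s ^ r * laplaceWeight F C M s) (Ioi 0) := by
  refine (integrableOn_rpow_mul_exp_neg_mul hr hM).mono' (by unfold laplaceWeight; fun_prop) ?_
  filter_upwards [self_mem_ae_restrict measurableSet_Ioi] with s (hs : 0 < s)
  rw [norm_of_nonneg (mul_nonneg (rpow_nonneg hs.le r)
    (laplaceWeight_nonneg hF0 M s))]
  exact mul_le_mul_of_nonneg_left (laplaceWeight_le_exp hF1 M s) (rpow_nonneg hs.le r)

theorem rpow_mul_laplaceWeight_nonneg_ae (hF0 : ∀ t, 0 ≤ F t) (r M : ℝ) :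
    0 ≤ᵐ[volume.restrict (Ioi 0)] fun s => s ^ r * laplaceWeight F C M s := by
  filter_upwards [self_mem_ae_restrict measurableSet_Ioi] with s (hs : 0 < s)
  exact mul_nonneg (rpow_nonneg hs.le r) (laplaceWeight_nonneg hF0 M s)

theorem eventually_forall_mem_Icc_le_rpow_mul_laplaceWeight (hF0 : ∀ t, 0 ≤ F t) (hC : 0 < C)
    (hlog : Tendsto (fun t => t * log (F t)) (𝓝[>] 0) (𝓝 (-C))) {r a : ℝ} (ha : 0 < a)
    (ha1 : a < 1) :
    ∀ᶠ M in atTop, ∀ s ∈ Icc 1 (1 + a),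
      min 1 (2 ^ r) * exp (-((2 + 2 * a) * M)) ≤ s ^ r * laplaceWeight F C M s := by
  obtain ⟨t₀, ht₀, hsmall⟩ := (nhdsGT_basis (0 : ℝ)).eventually_iff.mp
    (eventually_exp_le_abs_le_exp_of_tendsto_mul_log hlog (mul_pos ha hC)
      (by nlinarith : a * C < C))
  filter_upwards [eventually_gt_atTop (2 * C / t₀)] with M hM
  rintro s ⟨hs1, hs2⟩
  have hM0 : 0 < M := lt_trans (by positivity) hM
  have hs0 : 0 < s := by linarith
  have ht : C / M * s < t₀ := by
    rw [div_lt_iff₀ ht₀] at hM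
    calc C / M * s ≤ C / M * 2 := by gcongr; linarith
      _ < t₀ := by rw [div_mul_eq_mul_div, div_lt_iff₀ hM0]; linarith
  have hF : exp (-(M * (1 + a))) ≤ F (C / M * s) := by
    have := (hsmall ⟨by positivity, ht⟩).1
    rw [abs_of_nonneg (hF0 _)] at this
    refine le_trans ?_ this
    rw [exp_le_exp, show -(C + a * C) / (C / M * s) = -(M * (1 + a) / s) by field_simp,
      neg_le_neg_iff]
    exact div_le_self (by positivity) hs1
  calc min 1 (2 ^ r) * exp (-((2 + 2 * a) * M))
      ≤ s ^ r * (exp (-(M * s)) * exp (-(M * (1 + a)))) := by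
        rw [← exp_add]
        gcongr
        · exact min_one_rpow_le_rpow hs1 (by linarith)
        · nlinarith
    _ ≤ s ^ r * laplaceWeight F C M s := by
        unfold laplaceWeight
        gcongr

theorem eventually_le_integral_rpow_mul_laplaceWeight (hF0 : ∀ t, 0 ≤ F t)
    (hF1 : ∀ t, F t ≤ 1) (hFm : Measurable F) (hC : 0 < C)
    (hlog : Tendsto (fun t => t * log (F t)) (𝓝[>] 0) (𝓝 (-C))) {r a : ℝ} (hr : -1 < r)
    (ha : 0 < a) (ha1 : a < 1) :
    ∀ᶠ M in atTop, min 1 (2 ^ r) * exp (-((2 + 2 * a) * M)) * a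
      ≤ ∫ s in Ioi 0, s ^ r * laplaceWeight F C M s := by
  filter_upwards [eventually_forall_mem_Icc_le_rpow_mul_laplaceWeight hF0 hC hlog ha ha1,
    eventually_gt_atTop 0] with M hlow hM0
  have hband : Icc 1 (1 + a) ⊆ Ioi 0 := fun s hs => lt_of_lt_of_le one_pos hs.1
  have hint := integrableOn_rpow_mul_laplaceWeight (C := C) hF0 hF1 hFm hr hM0
  calc min 1 (2 ^ r) * exp (-((2 + 2 * a) * M)) * a
      = ∫ s in Icc 1 (1 + a), min 1 (2 ^ r) * exp (-((2 + 2 * a) * M)) := by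
        rw [setIntegral_const, volume_real_Icc_of_le (by linarith), smul_eq_mul]; ring
    _ ≤ ∫ s in Icc 1 (1 + a), s ^ r * laplaceWeight F C M s :=
        setIntegral_mono_on (integrableOn_const (by simp)) (hint.mono_set hband)
          measurableSet_Icc hlow
    _ ≤ ∫ s in Ioi 0, s ^ r * laplaceWeight F C M s :=
        setIntegral_mono_set hint (rpow_mul_laplaceWeight_nonneg_ae hF0 r M) hband.eventuallyLE

theorem exists_integral_sdiff_Icc_rpow_mul_laplaceWeight_le (hF0 : ∀ t, 0 ≤ F t)
    (hF1 : ∀ t, F t ≤ 1) (hFm : Measurable F) (hC : 0 < C)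
    (hlog : Tendsto (fun t => t * log (F t)) (𝓝[>] 0) (𝓝 (-C))) {r δ : ℝ} (hr : -1 < r)
    (hδ : 0 < δ) (hδ' : δ ≤ 1 / 2) :
    ∃ A, ∀ M ≥ 1, ∫ s in Ioi 0 \ Icc (1 - δ) (1 + δ), s ^ r * laplaceWeight F C M s
      ≤ A * exp (-((2 + δ ^ 2 / 4) * (M - 1))) := by
  obtain ⟨K, hK0, hK⟩ := exists_le_mul_exp_of_tendsto_mul_log hF1 hlog
    (by positivity : 0 < δ ^ 2 / 16 * C)
    (by nlinarith [pow_le_pow_left₀ hδ.le hδ' 2] : δ ^ 2 / 16 * C < C)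
  have hexp : IntegrableOn (fun s : ℝ => s ^ r * exp (-s)) (Ioi 0) := by
    simpa only [one_mul] using integrableOn_rpow_mul_exp_neg_mul hr one_pos
  refine ⟨K * ∫ s in Ioi 0, s ^ r * exp (-s), fun M hM => ?_⟩
  have hM0 : 0 < M := by linarith
  set B := K * exp (-((2 + δ ^ 2 / 4) * (M - 1)))
  have hpt : ∀ s ∈ Ioi 0 \ Icc (1 - δ) (1 + δ),
      s ^ r * laplaceWeight F C M s ≤ B * (s ^ r * exp (-s)) := by
    rintro s ⟨hs : 0 < s, hout⟩
    have hφ := two_add_sq_div_four_le_add_div hδ hδ' hs hout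
    have hφs : s ≤ s + (1 - δ ^ 2 / 16) / s := by
      have : 0 ≤ (1 - δ ^ 2 / 16) / s := div_nonneg (by nlinarith) hs.le
      linarith
    have hw : laplaceWeight F C M s ≤ K * exp (-(M * (s + (1 - δ ^ 2 / 16) / s))) := by
      calc laplaceWeight F C M s
          ≤ exp (-(M * s)) * (K * exp (-(C - δ ^ 2 / 16 * C) / (C / M * s))) :=
            mul_le_mul_of_nonneg_left (hK _ (by positivity)) (exp_pos _).le
        _ = K * exp (-(M * (s + (1 - δ ^ 2 / 16) / s))) := by
            rw [mul_left_comm, ← exp_add]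
            congr 2
            field_simp
            ring
    calc s ^ r * laplaceWeight F C M s
        ≤ s ^ r * (K * exp (-(M * (s + (1 - δ ^ 2 / 16) / s)))) :=
          mul_le_mul_of_nonneg_left hw (rpow_nonneg hs.le r)
      _ ≤ s ^ r * (K * exp (-((2 + δ ^ 2 / 4) * (M - 1)) + -s)) := by
          -- with `φ = s + (1 - δ²/16)/s`: `M φ = (M - 1) φ + φ ≥ (M - 1)(2 + δ²/4) + s`
          gcongr
          nlinarith
      _ = B * (s ^ r * exp (-s)) := by rw [exp_add]; ring
  calc ∫ s in Ioi 0 \ Icc (1 - δ) (1 + δ), s ^ r * laplaceWeight F C M s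
      ≤ ∫ s in Ioi 0 \ Icc (1 - δ) (1 + δ), B * (s ^ r * exp (-s)) :=
        setIntegral_mono_on ((integrableOn_rpow_mul_laplaceWeight hF0 hF1 hFm hr hM0).mono_set
          sdiff_subset) ((hexp.mono_set sdiff_subset).const_mul B)
          (measurableSet_Ioi.diff measurableSet_Icc) hpt
    _ ≤ B * ∫ s in Ioi 0, s ^ r * exp (-s) := by
        rw [integral_const_mul]
        gcongr
        · filter_upwards [self_mem_ae_restrict measurableSet_Ioi] with s (hs : 0 < s)
          exact mul_nonneg (rpow_nonneg hs.le r) (exp_pos _).le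
        · exact sdiff_subset
    _ = (K * ∫ s in Ioi 0, s ^ r * exp (-s)) * exp (-((2 + δ ^ 2 / 4) * (M - 1))) := by ring

theorem eventually_integral_rpow_mul_laplaceWeight_pos (hF0 : ∀ t, 0 ≤ F t)
    (hF1 : ∀ t, F t ≤ 1) (hFm : Measurable F) (hC : 0 < C)
    (hlog : Tendsto (fun t => t * log (F t)) (𝓝[>] 0) (𝓝 (-C))) {r : ℝ} (hr : -1 < r) :
    ∀ᶠ M in atTop, 0 < ∫ s in Ioi 0, s ^ r * laplaceWeight F C M s := by
  filter_upwards [eventually_le_integral_rpow_mul_laplaceWeight hF0 hF1 hFm hC hlog hr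
    one_half_pos one_half_lt_one] with M hM
  refine lt_of_lt_of_le ?_ hM
  have : 0 < min 1 ((2 : ℝ) ^ r) := lt_min one_pos (by positivity)
  positivity

theorem eventually_integral_rpow_mul_laplaceWeight_le (hF0 : ∀ t, 0 ≤ F t)
    (hF1 : ∀ t, F t ≤ 1) (hFm : Measurable F) (hC : 0 < C)
    (hlog : Tendsto (fun t => t * log (F t)) (𝓝[>] 0) (𝓝 (-C))) {r r' ε : ℝ} (hr : -1 < r)
    (hr' : -1 < r') (hε : 0 < ε) :
    ∀ᶠ M in atTop, ∫ s in Ioi 0, s ^ r * laplaceWeight F C M s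
      ≤ (1 + ε) * ∫ s in Ioi 0, s ^ r' * laplaceWeight F C M s := by
  obtain ⟨δ, hδ, hδ', hnear⟩ :
      ∃ δ > 0, δ ≤ 1 / 2 ∧ ∀ s ∈ Icc (1 - δ) (1 + δ), s ^ (r - r') ≤ 1 + ε / 2 := by
    have hcont : ContinuousAt (fun s : ℝ => s ^ (r - r')) 1 :=
      continuousAt_rpow_const 1 _ (Or.inl one_ne_zero)
    have hev : ∀ᶠ s in 𝓝 1, s ^ (r - r') < 1 + ε / 2 :=
      hcont.eventually (gt_mem_nhds (by simp only [one_rpow]; linarith))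
    obtain ⟨δ, hδ, hball⟩ := Metric.nhds_basis_closedBall.eventually_iff.mp hev
    refine ⟨min δ (1 / 2), by positivity, min_le_right _ _, fun s hs => (hball ?_).le⟩
    rw [Real.closedBall_eq_Icc]
    exact Icc_subset_Icc (by linarith [min_le_left δ (1 / 2)])
      (by linarith [min_le_left δ (1 / 2)]) hs
  obtain ⟨A, hA⟩ :=
    exists_integral_sdiff_Icc_rpow_mul_laplaceWeight_le hF0 hF1 hFm hC hlog hr hδ hδ'
  set m := min 1 ((2 : ℝ) ^ r')
  have hm : 0 < m := lt_min one_pos (by positivity)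
  have hdecay :
      Tendsto (fun M => A * exp (2 + δ ^ 2 / 4) * exp (-(δ ^ 2 / 8 * M))) atTop (𝓝 0) := by
    have : Tendsto (fun M => -(δ ^ 2 / 8 * M)) atTop atBot :=
      tendsto_neg_atTop_atBot.comp (tendsto_id.const_mul_atTop (by positivity))
    simpa using (tendsto_exp_atBot.comp this).const_mul (A * exp (2 + δ ^ 2 / 4))
  filter_upwards [eventually_le_integral_rpow_mul_laplaceWeight hF0 hF1 hFm hC hlog hr'
      (a := δ ^ 2 / 16) (by positivity) (by nlinarith [pow_le_pow_left₀ hδ.le hδ' 2]),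
    hdecay.eventually (ge_mem_nhds (by positivity : (0 : ℝ) < ε / 2 * (m * (δ ^ 2 / 16)))),
    eventually_ge_atTop 1] with M hlow hsmall hM
  have hM0 : 0 < M := by linarith
  have htail : ∫ s in Ioi 0 \ Icc (1 - δ) (1 + δ), s ^ r * laplaceWeight F C M s
      ≤ ε / 2 * ∫ s in Ioi 0, s ^ r' * laplaceWeight F C M s :=
    calc ∫ s in Ioi 0 \ Icc (1 - δ) (1 + δ), s ^ r * laplaceWeight F C M s
        ≤ A * exp (-((2 + δ ^ 2 / 4) * (M - 1))) := hA M hM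
      _ = A * exp (2 + δ ^ 2 / 4) * exp (-(δ ^ 2 / 8 * M))
            * exp (-((2 + 2 * (δ ^ 2 / 16)) * M)) := by
          simp only [mul_assoc, ← exp_add]
          ring_nf
      _ ≤ ε / 2 * (m * (δ ^ 2 / 16)) * exp (-((2 + 2 * (δ ^ 2 / 16)) * M)) := by gcongr
      _ = ε / 2 * (m * exp (-((2 + 2 * (δ ^ 2 / 16)) * M)) * (δ ^ 2 / 16)) := by ring
      _ ≤ ε / 2 * ∫ s in Ioi 0, s ^ r' * laplaceWeight F C M s := by gcongr
  have hK : Icc (1 - δ) (1 + δ) ⊆ Ioi 0 := fun s hs => lt_of_lt_of_le (by linarith) hs.1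
  have hsplit := setIntegral_le_mul_add_setIntegral_sdiff (c := 1 + ε / 2)
    (f := fun s => s ^ r * laplaceWeight F C M s) (g := fun s => s ^ r' * laplaceWeight F C M s)
    measurableSet_Icc hK
    (integrableOn_rpow_mul_laplaceWeight hF0 hF1 hFm hr hM0)
    (integrableOn_rpow_mul_laplaceWeight hF0 hF1 hFm hr' hM0)
    (rpow_mul_laplaceWeight_nonneg_ae hF0 r' M) (by positivity) fun s hs => by
      have hs0 : 0 < s := hK hs
      rw [show r = (r - r') + r' by ring, rpow_add hs0, mul_assoc]
      exact mul_le_mul_of_nonneg_right (hnear s hs)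
        (mul_nonneg (rpow_nonneg hs0.le r') (laplaceWeight_nonneg hF0 M s))
  linarith

theorem tendsto_integral_rpow_mul_laplaceWeight_div (hF0 : ∀ t, 0 ≤ F t)
    (hF1 : ∀ t, F t ≤ 1) (hFm : Measurable F) (hC : 0 < C)
    (hlog : Tendsto (fun t => t * log (F t)) (𝓝[>] 0) (𝓝 (-C))) {p q : ℝ} (hp : -1 < p)
    (hq : -1 < q) :
    Tendsto (fun M => (∫ s in Ioi 0, s ^ p * laplaceWeight F C M s)
      / ∫ s in Ioi 0, s ^ q * laplaceWeight F C M s) atTop (𝓝 1) :=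
  tendsto_div_nhds_one_of_le_one_add
    (fun _ hε => eventually_integral_rpow_mul_laplaceWeight_le hF0 hF1 hFm hC hlog hp hq hε)
    (fun _ hε => eventually_integral_rpow_mul_laplaceWeight_le hF0 hF1 hFm hC hlog hq hp hε)
    (eventually_integral_rpow_mul_laplaceWeight_pos hF0 hF1 hFm hC hlog hq)

end LaplaceWeight

theorem laplace_integral_power_invariance_general
    (Ω : Type*) [MeasureSpace Ω] [IsProbabilityMeasure (ℙ : Measure Ω)]
    (τ : Ω → ℝ)
    (F : ℝ → ℝ) (hF : ∀ t, F t = (ℙ {ω | τ ω ≤ t}).toReal)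
    (C : ℝ) (hC : 0 < C)
    (hlog : Tendsto (fun t : ℝ => t * Real.log (F t)) (nhdsWithin 0 (Set.Ioi 0))
      (nhds (-C)))
    (h : ℝ → ℝ) (hh : ∀ t, 0 < t → h t = Real.exp (C / t) * F t)
    (p q : ℝ) (hp : -1 < p) (hq : -1 < q) :
    Tendsto (fun lam : ℝ =>
        (∫ s in Set.Ioi (0:ℝ),
            s ^ p * Real.exp (-Real.sqrt (lam * C) * (s + 1 / s))
              * h (Real.sqrt (C / lam) * s))
          / ∫ s in Set.Ioi (0:ℝ),
              s ^ q * Real.exp (-Real.sqrt (lam * C) * (s + 1 / s))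
                * h (Real.sqrt (C / lam) * s))
      atTop (nhds 1) := by
  have hF0 : ∀ t, 0 ≤ F t := fun t => hF t ▸ ENNReal.toReal_nonneg
  have hF1 : ∀ t, F t ≤ 1 := fun t => by rw [hF, ← measureReal_def]; exact measureReal_le_one
  have hFm : Measurable F := Monotone.measurable fun a b hab => by
    simp only [hF, ← measureReal_def]
    exact measureReal_mono fun ω hω => le_trans hω hab
  have hM : Tendsto (fun lam => √(lam * C)) atTop atTop :=
    tendsto_sqrt_atTop.comp (tendsto_id.atTop_mul_const hC)
  refine ((tendsto_integral_rpow_mul_laplaceWeight_div hF0 hF1 hFm hC hlog hp hq).comp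
    hM).congr' ?_
  filter_upwards [eventually_gt_atTop 0] with lam hlam
  have hM0 : 0 < √(lam * C) := by positivity
  have hscale : √(C / lam) = C / √(lam * C) := by
    rw [eq_div_iff hM0.ne', ← sqrt_mul (by positivity), show C / lam * (lam * C) = C ^ 2 by
      field_simp, sqrt_sq hC.le]
  have hw : ∀ r : ℝ, ∫ s in Ioi 0, s ^ r * laplaceWeight F C √(lam * C) s
      = ∫ s in Ioi 0, s ^ r * exp (-√(lam * C) * (s + 1 / s)) * h (√(C / lam) * s) :=
    fun r => setIntegral_congr_fun measurableSet_Ioi fun s hs => by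
      rw [hscale, mul_assoc, exp_mul_apply_eq_laplaceWeight hh hC hM0 hs]
  simp only [Function.comp_def, hw]

/-- For `p, q > −1`, the Laplace-type integrals with weights `s^p` and `s^q` are
asymptotically equivalent as `λ → ∞`. -/
theorem laplace_integral_power_invariance
    (Ω : Type*) [MeasureSpace Ω] [IsProbabilityMeasure (ℙ : Measure Ω)]
    (τ : Ω → ℝ) (hτ : Measurable τ)
    (F : ℝ → ℝ) (hF : ∀ t, F t = (ℙ {ω | τ ω ≤ t}).toReal)
    (C : ℝ) (hC : 0 < C)
    (hlog : Tendsto (fun t : ℝ => t * Real.log (F t)) (nhdsWithin 0 (Set.Ioi 0))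
      (nhds (-C)))
    (h : ℝ → ℝ) (hh : ∀ t, 0 < t → h t = Real.exp (C / t) * F t)
    (p q : ℝ) (hp : -1 < p) (hq : -1 < q) :
    Tendsto (fun lam : ℝ =>
        (∫ s in Set.Ioi (0:ℝ),
            s ^ p * Real.exp (-Real.sqrt (lam * C) * (s + 1 / s))
              * h (Real.sqrt (C / lam) * s))
          / ∫ s in Set.Ioi (0:ℝ),
              s ^ q * Real.exp (-Real.sqrt (lam * C) * (s + 1 / s))
                * h (Real.sqrt (C / lam) * s))
      atTop (nhds 1) :=
  laplace_integral_power_invariance_general Ω τ F hF C hC hlog h hh p q hp hq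
end

section
/- Let τ satisfy lim_{t→0+} t ln P(τ ≤ t) = −C < 0 with CDF F, and let σ be gamma with rate λ and shape β, with survival function S_σ and density f_σ. Then for every m ≥ 1, λ^{m/2} · (∫₀^∞ m t^{m−1} S_σ(t) F(t) dt)/(∫₀^∞ f_σ(t) F(t) dt) → 0 as λ → ∞. -/
/-!
Write `D(λ) = ∫ f_σ F` and `N(λ) = ∫ m t^(m-1) S_σ F`. The hypothesis on `F` gives
`exp (-2C/t) ≤ F t ≤ exp (-C/(2t))` near `0`. Restricting `D` to `(λ^(-1/2), 2 λ^(-1/2)]` gives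
`D(λ) ≳ exp (-K √λ)` with `K = 2C + 2`. In `N`, with `T = 2β + 2`, the part `t ≤ T/λ` is
`O(exp (-c λ))` because `F` is tiny there, while for `λ t ≥ T` the tail bound
`Γ(β, x) ≤ 2 x^(β-1) e^(-x)` gives `S_σ ≤ (2/λ) f_σ`, so that part is at most
`(2m/λ) ∫ t^(m-1) f_σ F`. Splitting this moment at `A = 2K/√λ` bounds it by
`A^(m-1) D + O(λ^(1-m) exp (-K √λ))`. Altogether `λ^(m/2) N / D = O(λ^(-1/2) + λ^(-m/2))`.
-/

open MeasureTheory ProbabilityTheory Filter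
open Real Set Topology

noncomputable def upperGamma (β x : ℝ) : ℝ := ∫ u in Ioi x, u ^ (β - 1) * exp (-u)

lemma upperGamma_nonneg (β : ℝ) {x : ℝ} (hx : 0 ≤ x) : 0 ≤ upperGamma β x :=
  setIntegral_nonneg measurableSet_Ioi fun u hu => by
    have : 0 ≤ u ^ (β - 1) := rpow_nonneg (hx.trans (le_of_lt hu)) _
    positivity

lemma upperGamma_le_Gamma {β x : ℝ} (hβ : 0 < β) (hx : 0 ≤ x) : upperGamma β x ≤ Gamma β := by
  have hint : IntegrableOn (fun u => u ^ (β - 1) * exp (-u)) (Ioi 0) :=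
    (GammaIntegral_convergent hβ).congr_fun (fun u _ => mul_comm _ _) measurableSet_Ioi
  rw [Gamma_eq_integral hβ, upperGamma]
  simp_rw [mul_comm (exp _)]
  refine setIntegral_mono_set hint ?_ (Ioi_subset_Ioi hx).eventuallyLE
  filter_upwards [ae_restrict_mem measurableSet_Ioi] with u (hu : 0 < u)
  positivity

lemma rpow_mul_exp_neg_half_le {β x u : ℝ} (hx : 0 < x) (hβx : 2 * (β - 1) ≤ x) (hxu : x ≤ u) :
    u ^ (β - 1) * exp (-(u / 2)) ≤ x ^ (β - 1) * exp (-(x / 2)) := by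
  have hu : 0 < u := hx.trans_le hxu
  rw [rpow_def_of_pos hu, rpow_def_of_pos hx, ← exp_add, ← exp_add, exp_le_exp]
  have hlog : log u - log x ≤ (u - x) / x := by
    rw [← log_div hu.ne' hx.ne', sub_div, div_self hx.ne']
    exact log_le_sub_one_of_pos (div_pos hu hx)
  have hlog₀ : 0 ≤ log u - log x := sub_nonneg.mpr (log_le_log hx hxu)
  have hmul : (u - x) / x * x = u - x := div_mul_cancel₀ _ hx.ne'
  rcases le_total β 1 with hβ | hβ
  · nlinarith [mul_nonneg (sub_nonneg.mpr hβ) hlog₀]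
  · nlinarith [mul_le_mul_of_nonneg_left hlog (sub_nonneg.mpr hβ),
      mul_nonneg (div_nonneg (sub_nonneg.mpr hxu) hx.le) (sub_nonneg.mpr hβx)]

lemma upperGamma_le {β x : ℝ} (hx : 0 < x) (hβx : 2 * (β - 1) ≤ x) :
    upperGamma β x ≤ 2 * x ^ (β - 1) * exp (-x) := by
  have hexp : ∫ u in Ioi x, exp (-(1 / 2) * u) = 2 * exp (-(x / 2)) := by
    rw [integral_exp_mul_Ioi (by norm_num)]
    ring_nf
  calc upperGamma β x
      ≤ ∫ u in Ioi x, x ^ (β - 1) * exp (-(x / 2)) * exp (-(1 / 2) * u) := by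
        refine integral_mono_of_nonneg ?_
          ((exp_neg_integrableOn_Ioi x (by norm_num)).const_mul _) ?_
        all_goals filter_upwards [ae_restrict_mem measurableSet_Ioi] with u (hu : x < u)
        · have : 0 ≤ u ^ (β - 1) := rpow_nonneg (hx.trans hu).le _
          positivity
        · calc u ^ (β - 1) * exp (-u) = u ^ (β - 1) * exp (-(u / 2)) * exp (-(1 / 2) * u) := by
                rw [mul_assoc, ← exp_add]
                ring_nf
            _ ≤ x ^ (β - 1) * exp (-(x / 2)) * exp (-(1 / 2) * u) :=
                mul_le_mul_of_nonneg_right (rpow_mul_exp_neg_half_le hx hβx hu.le) (exp_pos _).le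
    _ = 2 * x ^ (β - 1) * exp (-x) := by
        rw [integral_const_mul, hexp, mul_left_comm, mul_assoc, ← exp_add]
        ring_nf

lemma gammaPDFReal_of_nonneg {a r x : ℝ} (hx : 0 ≤ x) :
    gammaPDFReal a r x = r ^ a / Gamma a * x ^ (a - 1) * exp (-(r * x)) :=
  if_pos hx

lemma upperGamma_div_Gamma_le_gammaPDFReal {β r t : ℝ} (hβ : 0 < β) (hr : 0 < r) (ht : 0 < t)
    (hβrt : 2 * (β - 1) ≤ r * t) :
    upperGamma β (r * t) / Gamma β ≤ 2 / r * gammaPDFReal β r t := by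
  rw [gammaPDFReal_of_nonneg ht.le, div_le_iff₀ (Gamma_pos_of_pos hβ)]
  refine (upperGamma_le (mul_pos hr ht) hβrt).trans_eq ?_
  rw [mul_rpow hr.le ht.le, rpow_sub_one hr.ne']
  field_simp

lemma integrableOn_rpow_mul_gammaPDFReal_mul {β r p : ℝ} (hr : 0 < r) (hp : -1 < β - 1 + p)
    {F : ℝ → ℝ} (hFm : Measurable F) (hF : ∀ t, ‖F t‖ ≤ 1) :
    IntegrableOn (fun t => t ^ p * gammaPDFReal β r t * F t) (Ioi 0) := by
  have h := (integrableOn_rpow_mul_exp_neg_mul_rpow hp one_pos hr).const_mul (r ^ β / Gamma β)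
  refine Integrable.mul_bdd (IntegrableOn.congr_fun h (fun t (ht : 0 < t) => ?_) measurableSet_Ioi)
    hFm.aestronglyMeasurable (ae_of_all _ hF)
  rw [gammaPDFReal_of_nonneg ht.le, rpow_one, rpow_add ht, neg_mul]
  ring

lemma min_one_two_rpow_le_rpow {p y : ℝ} (h1 : 1 ≤ y) (h2 : y ≤ 2) : min 1 (2 ^ p) ≤ y ^ p := by
  rcases le_total 0 p with hp | hp
  · exact (min_le_left _ _).trans (one_le_rpow h1 hp)
  · exact (min_le_right _ _).trans (rpow_le_rpow_of_nonpos (by linarith) h2 hp)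

lemma le_gammaPDFReal_sq_mul {β b s t y : ℝ} (hβ : 0 < β) (hb : 0 ≤ b) (hs : 0 < s)
    (ht : t ∈ Ioc (1 / s) (2 / s)) (hy : exp (-b / t) ≤ y) :
    s ^ (β + 1) * min 1 (2 ^ (β - 1)) / Gamma β * exp (-((b + 2) * s))
      ≤ gammaPDFReal β (s ^ 2) t * y := by
  obtain ⟨h1, h2⟩ := ht
  have ht : 0 < t := (by positivity : (0 : ℝ) < 1 / s).trans h1
  have hst1 : 1 ≤ s * t := by rw [div_lt_iff₀ hs] at h1; linarith
  have hst2 : s * t ≤ 2 := by rwa [le_div_iff₀ hs, mul_comm] at h2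
  have hpow : (s ^ 2) ^ β * t ^ (β - 1) = s ^ (β + 1) * (s * t) ^ (β - 1) := by
    rw [mul_rpow hs.le ht.le, ← mul_assoc, ← rpow_add hs, ← rpow_natCast, ← rpow_mul hs.le]
    ring_nf
  have hexp : exp (-((b + 2) * s)) ≤ exp (-(s ^ 2 * t)) * exp (-b / t) := by
    rw [← exp_add, exp_le_exp, neg_div, div_eq_mul_inv]
    have : t⁻¹ ≤ s := by rw [inv_le_comm₀ ht hs, ← one_div]; exact h1.le
    nlinarith [mul_le_mul_of_nonneg_left this hb]
  have hΓ := Gamma_pos_of_pos hβ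
  calc s ^ (β + 1) * min 1 (2 ^ (β - 1)) / Gamma β * exp (-((b + 2) * s))
      ≤ s ^ (β + 1) * (s * t) ^ (β - 1) / Gamma β * (exp (-(s ^ 2 * t)) * exp (-b / t)) := by
        gcongr
        exact min_one_two_rpow_le_rpow hst1 hst2
    _ = gammaPDFReal β (s ^ 2) t * exp (-b / t) := by
        rw [gammaPDFReal_of_nonneg ht.le, ← hpow]
        ring
    _ ≤ gammaPDFReal β (s ^ 2) t * y :=
        mul_le_mul_of_nonneg_left hy (gammaPDFReal_nonneg hβ (by positivity) t)

lemma le_integral_gammaPDFReal_mul {β b s t₀ : ℝ} {F : ℝ → ℝ} (hβ : 0 < β) (hb : 0 ≤ b)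
    (hs : 0 < s) (hst₀ : 2 / s < t₀) (hF : ∀ t ∈ Ioo 0 t₀, exp (-b / t) ≤ F t)
    (hF₀ : ∀ t, 0 ≤ F t) (hint : IntegrableOn (fun t => gammaPDFReal β (s ^ 2) t * F t) (Ioi 0)) :
    min 1 (2 ^ (β - 1)) / Gamma β * s ^ β * exp (-((b + 2) * s))
      ≤ ∫ t in Ioi 0, gammaPDFReal β (s ^ 2) t * F t := by
  have hI : Ioc (1 / s) (2 / s) ⊆ Ioi 0 := fun t ht => (by positivity : (0 : ℝ) < 1 / s).trans ht.1
  have hvol : volume.real (Ioc (1 / s) (2 / s)) = s⁻¹ := by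
    rw [Real.volume_real_Ioc_of_le (by gcongr; norm_num)]
    ring
  calc min 1 (2 ^ (β - 1)) / Gamma β * s ^ β * exp (-((b + 2) * s))
      = volume.real (Ioc (1 / s) (2 / s)) • (s ^ (β + 1) * min 1 (2 ^ (β - 1)) / Gamma β
          * exp (-((b + 2) * s))) := by
        rw [hvol, smul_eq_mul, rpow_add hs, rpow_one]
        field_simp
    _ ≤ ∫ t in Ioc (1 / s) (2 / s), gammaPDFReal β (s ^ 2) t * F t :=
        setIntegral_ge_of_const_le measurableSet_Ioc measure_Ioc_lt_top.ne
          (fun t ht => le_gammaPDFReal_sq_mul hβ hb hs ht (hF t ⟨hI ht, ht.2.trans_lt hst₀⟩))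
          (hint.mono_set hI)
    _ ≤ ∫ t in Ioi 0, gammaPDFReal β (s ^ 2) t * F t :=
        setIntegral_mono_set hint (ae_restrict_of_forall_mem measurableSet_Ioi fun t _ =>
          mul_nonneg (gammaPDFReal_nonneg hβ (by positivity) t) (hF₀ t)) hI.eventuallyLE

lemma integral_Ioc_mul_rpow_sub_one {m b : ℝ} (hm : 0 < m) (hb : 0 ≤ b) :
    ∫ t in Ioc 0 b, m * t ^ (m - 1) = b ^ m := by
  rw [← intervalIntegral.integral_of_le hb, intervalIntegral.integral_const_mul,
    integral_rpow (Or.inl (by linarith)), sub_add_cancel, zero_rpow hm.ne']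
  field_simp
  ring

lemma integrableOn_Ioc_mul_rpow_sub_one {m b : ℝ} (hm : 0 < m) (hb : 0 ≤ b) :
    IntegrableOn (fun t => m * t ^ (m - 1)) (Ioc 0 b) :=
  ((intervalIntegrable_iff_integrableOn_Ioc_of_le hb).mp
    (intervalIntegral.intervalIntegrable_rpow' (by linarith))).const_mul m

lemma mul_rpow_mul_upperGamma_div_mul_le {β r T a m t₀ t : ℝ} {F : ℝ → ℝ} (hβ : 0 < β)
    (hr : 0 < r) (hT : 0 < T) (hβT : 2 * (β - 1) ≤ T) (ha : 0 ≤ a) (hm : 0 ≤ m)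
    (hTt₀ : T / r < t₀) (hF : ∀ t ∈ Ioo 0 t₀, F t ≤ exp (-a / t)) (hF₀ : ∀ t, 0 ≤ F t)
    (ht : 0 < t) :
    m * t ^ (m - 1) * (upperGamma β (r * t) / Gamma β) * F t
      ≤ exp (-(a / T * r)) * (Ioc 0 (T / r)).indicator (fun t => m * t ^ (m - 1)) t
        + 2 * m / r * (t ^ (m - 1) * gammaPDFReal β r t * F t) := by
  have hΓ := Gamma_pos_of_pos hβ
  have hS₀ := div_nonneg (upperGamma_nonneg β (mul_pos hr ht).le) hΓ.le
  have htm := rpow_nonneg ht.le (m - 1)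
  have hf := gammaPDFReal_nonneg hβ hr t
  have hFt := hF₀ t
  rcases le_or_gt t (T / r) with htb | hbt
  · have hS₁ : upperGamma β (r * t) / Gamma β ≤ 1 :=
      (div_le_one hΓ).mpr (upperGamma_le_Gamma hβ (mul_pos hr ht).le)
    have hFsmall : F t ≤ exp (-(a / T * r)) := by
      refine (hF t ⟨ht, htb.trans_lt hTt₀⟩).trans (exp_le_exp.mpr ?_)
      rw [neg_div, neg_le_neg_iff, div_mul_eq_mul_div, div_le_div_iff₀ hT ht]
      rw [le_div_iff₀ hr] at htb
      nlinarith
    rw [indicator_of_mem (show t ∈ Ioc 0 (T / r) from ⟨ht, htb⟩)]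
    have : 0 ≤ 2 * m / r * (t ^ (m - 1) * gammaPDFReal β r t * F t) := by positivity
    calc m * t ^ (m - 1) * (upperGamma β (r * t) / Gamma β) * F t
        ≤ m * t ^ (m - 1) * 1 * exp (-(a / T * r)) := by gcongr
      _ ≤ _ := by linarith
  · have hS := upperGamma_div_Gamma_le_gammaPDFReal hβ hr ht
      (by rw [div_lt_iff₀ hr] at hbt; linarith)
    rw [indicator_of_notMem (fun h => (not_le.mpr hbt) h.2), mul_zero, zero_add]
    calc m * t ^ (m - 1) * (upperGamma β (r * t) / Gamma β) * F t
        ≤ m * t ^ (m - 1) * (2 / r * gammaPDFReal β r t) * F t := by gcongr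
      _ = _ := by ring

lemma integral_upperGamma_mul_le {β r T a m t₀ : ℝ} {F : ℝ → ℝ} (hβ : 0 < β) (hr : 0 < r)
    (hT : 0 < T) (hβT : 2 * (β - 1) ≤ T) (ha : 0 ≤ a) (hm : 0 < m) (hTt₀ : T / r < t₀)
    (hF : ∀ t ∈ Ioo 0 t₀, F t ≤ exp (-a / t)) (hF₀ : ∀ t, 0 ≤ F t)
    (hint : IntegrableOn (fun t => t ^ (m - 1) * gammaPDFReal β r t * F t) (Ioi 0)) :
    ∫ t in Ioi 0, m * t ^ (m - 1) * (upperGamma β (r * t) / Gamma β) * F t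
      ≤ exp (-(a / T * r)) * (T / r) ^ m
        + 2 * m / r * ∫ t in Ioi 0, t ^ (m - 1) * gammaPDFReal β r t * F t := by
  have hb : 0 < T / r := div_pos hT hr
  have hhead : IntegrableOn ((Ioc 0 (T / r)).indicator fun t => m * t ^ (m - 1)) (Ioi 0) :=
    ((integrableOn_Ioc_mul_rpow_sub_one hm hb.le).integrable_indicator
      measurableSet_Ioc).integrableOn
  calc ∫ t in Ioi 0, m * t ^ (m - 1) * (upperGamma β (r * t) / Gamma β) * F t
      ≤ ∫ t in Ioi 0, (exp (-(a / T * r)) * (Ioc 0 (T / r)).indicator (fun t => m * t ^ (m - 1)) t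
          + 2 * m / r * (t ^ (m - 1) * gammaPDFReal β r t * F t)) := by
        refine integral_mono_of_nonneg ?_ ((hhead.const_mul _).add (hint.const_mul _)) ?_
        all_goals filter_upwards [ae_restrict_mem measurableSet_Ioi] with t (ht : 0 < t)
        · have := upperGamma_nonneg β (mul_pos hr ht).le
          have := rpow_nonneg ht.le (m - 1)
          have := hF₀ t
          have := Gamma_pos_of_pos hβ
          positivity
        · exact mul_rpow_mul_upperGamma_div_mul_le hβ hr hT hβT ha hm.le hTt₀ hF hF₀ ht
    _ = exp (-(a / T * r)) * (T / r) ^ m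
        + 2 * m / r * ∫ t in Ioi 0, t ^ (m - 1) * gammaPDFReal β r t * F t := by
      rw [integral_add (hhead.const_mul _) (hint.const_mul _), integral_const_mul,
        integral_const_mul, setIntegral_indicator measurableSet_Ioc,
        inter_eq_right.mpr Ioc_subset_Ioi_self, integral_Ioc_mul_rpow_sub_one hm hb.le]

lemma rpow_sub_one_mul_gammaPDFReal_le {β r m A t : ℝ} (hβ : 0 < β) (hr : 0 < r) (ht : 0 < t)
    (hAt : A < t) :
    t ^ (m - 1) * gammaPDFReal β r t
      ≤ exp (-(r * A / 2)) * (r ^ β / Gamma β * (t ^ (β + m - 1 - 1) * exp (-(r / 2 * t)))) := by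
  have hexp : exp (-(r * t)) = exp (-(r / 2 * t)) * exp (-(r / 2 * t)) := by
    rw [← exp_add]
    ring_nf
  have hpow : t ^ (m - 1) * t ^ (β - 1) = t ^ (β + m - 1 - 1) := by
    rw [← rpow_add ht]
    ring_nf
  have := Gamma_pos_of_pos hβ
  have := rpow_nonneg ht.le (β + m - 1 - 1)
  calc t ^ (m - 1) * gammaPDFReal β r t
      = r ^ β / Gamma β * (t ^ (β + m - 1 - 1) * exp (-(r / 2 * t))) * exp (-(r / 2 * t)) := by
        rw [gammaPDFReal_of_nonneg ht.le, hexp, ← hpow]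
        ring
    _ ≤ r ^ β / Gamma β * (t ^ (β + m - 1 - 1) * exp (-(r / 2 * t))) * exp (-(r * A / 2)) := by
        gcongr
        nlinarith
    _ = _ := mul_comm _ _

lemma rpow_sub_one_mul_gammaPDFReal_mul_le {β r m A t y : ℝ} (hβ : 0 < β) (hr : 0 < r)
    (hm : 1 ≤ m) (hA : 0 ≤ A) (ht : 0 < t) (hy₀ : 0 ≤ y) (hy₁ : y ≤ 1) :
    t ^ (m - 1) * gammaPDFReal β r t * y
      ≤ A ^ (m - 1) * (gammaPDFReal β r t * y)
        + exp (-(r * A / 2)) * (r ^ β / Gamma β * (t ^ (β + m - 1 - 1) * exp (-(r / 2 * t)))) := by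
  have hf := gammaPDFReal_nonneg hβ hr t
  have hΓ := Gamma_pos_of_pos hβ
  have := rpow_nonneg ht.le (β + m - 1 - 1)
  rcases le_or_gt t A with htA | hAt
  · have : t ^ (m - 1) ≤ A ^ (m - 1) := rpow_le_rpow ht.le htA (by linarith)
    have : 0 ≤ exp (-(r * A / 2))
        * (r ^ β / Gamma β * (t ^ (β + m - 1 - 1) * exp (-(r / 2 * t)))) := by
      positivity
    calc t ^ (m - 1) * gammaPDFReal β r t * y
        ≤ A ^ (m - 1) * (gammaPDFReal β r t * y) := by rw [mul_assoc]; gcongr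
      _ ≤ _ := by linarith
  · have : 0 ≤ A ^ (m - 1) * (gammaPDFReal β r t * y) := by
      have := rpow_nonneg hA (m - 1)
      positivity
    calc t ^ (m - 1) * gammaPDFReal β r t * y
        ≤ t ^ (m - 1) * gammaPDFReal β r t * 1 := by
          have := rpow_nonneg ht.le (m - 1)
          gcongr
      _ ≤ exp (-(r * A / 2)) * (r ^ β / Gamma β * (t ^ (β + m - 1 - 1) * exp (-(r / 2 * t)))) := by
          rw [mul_one]
          exact rpow_sub_one_mul_gammaPDFReal_le hβ hr ht hAt
      _ ≤ _ := by linarith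

lemma integral_rpow_mul_gammaPDFReal_mul_le {β r m A : ℝ} {F : ℝ → ℝ} (hβ : 0 < β) (hr : 0 < r)
    (hm : 1 ≤ m) (hA : 0 ≤ A) (hF₀ : ∀ t, 0 ≤ F t) (hF₁ : ∀ t, F t ≤ 1)
    (hint : IntegrableOn (fun t => gammaPDFReal β r t * F t) (Ioi 0)) :
    ∫ t in Ioi 0, t ^ (m - 1) * gammaPDFReal β r t * F t
      ≤ A ^ (m - 1) * (∫ t in Ioi 0, gammaPDFReal β r t * F t)
        + 2 ^ (β + m - 1) * Gamma (β + m - 1) / Gamma β * r ^ (1 - m) * exp (-(r * A / 2)) := by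
  have hβm : 0 < β + m - 1 := by linarith
  set g : ℝ → ℝ := fun t => r ^ β / Gamma β * (t ^ (β + m - 1 - 1) * exp (-(r / 2 * t)))
  have hg_int : IntegrableOn g (Ioi 0) := by
    refine Integrable.const_mul (IntegrableOn.congr_fun
      (integrableOn_rpow_mul_exp_neg_mul_rpow (s := β + m - 1 - 1) (by linarith) one_pos
        (half_pos hr))
      (fun t _ => by simp only [rpow_one, neg_mul]) measurableSet_Ioi) _
  have hg : ∫ t in Ioi 0, g t = 2 ^ (β + m - 1) * Gamma (β + m - 1) / Gamma β * r ^ (1 - m) := by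
    rw [integral_const_mul, integral_rpow_mul_exp_neg_mul_Ioi hβm (half_pos hr), one_div_div,
      div_rpow two_pos.le hr.le, show 1 - m = β - (β + m - 1) by ring, rpow_sub hr β (β + m - 1)]
    ring
  calc ∫ t in Ioi 0, t ^ (m - 1) * gammaPDFReal β r t * F t
      ≤ ∫ t in Ioi 0, (A ^ (m - 1) * (gammaPDFReal β r t * F t) + exp (-(r * A / 2)) * g t) := by
        refine integral_mono_of_nonneg ?_ ((hint.const_mul _).add (hg_int.const_mul _)) ?_
        all_goals filter_upwards [ae_restrict_mem measurableSet_Ioi] with t (ht : 0 < t)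
        · have := gammaPDFReal_nonneg hβ hr t
          have := hF₀ t
          have := rpow_nonneg ht.le (m - 1)
          positivity
        · exact rpow_sub_one_mul_gammaPDFReal_mul_le hβ hr hm hA ht (hF₀ t) (hF₁ t)
    _ = A ^ (m - 1) * (∫ t in Ioi 0, gammaPDFReal β r t * F t)
        + 2 ^ (β + m - 1) * Gamma (β + m - 1) / Gamma β * r ^ (1 - m) * exp (-(r * A / 2)) := by
      rw [integral_add (hint.const_mul _) (hg_int.const_mul _), integral_const_mul,
        integral_const_mul, hg]
      ring

lemma eventually_exp_neg_div_le_and_le_exp_neg_div {F : ℝ → ℝ} (hF : ∀ t, 0 ≤ F t) {a b C : ℝ}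
    (ha : 0 ≤ a) (haC : a < C) (hCb : C < b)
    (hlog : Tendsto (fun t => t * log (F t)) (𝓝[>] 0) (𝓝 (-C))) :
    ∀ᶠ t in 𝓝[>] 0, exp (-b / t) ≤ F t ∧ F t ≤ exp (-a / t) := by
  filter_upwards [hlog.eventually (Ioo_mem_nhds (neg_lt_neg hCb) (neg_lt_neg haC)),
    self_mem_nhdsWithin] with t ⟨hlow, hup⟩ (ht : 0 < t)
  have hFt : 0 < F t := (hF t).lt_of_ne fun h => by
    rw [← h, log_zero, mul_zero] at hup
    linarith
  rw [← exp_log hFt, exp_le_exp, exp_le_exp, div_le_iff₀ ht, le_div_iff₀ ht]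
  constructor <;> linarith [mul_comm t (log (F t))]

lemma rpow_mul_div_le_of_bounds {N D M m c c₁ T K s : ℝ} (hm : 1 ≤ m) (hs : 0 < s) (hc : 0 < c)
    (hc₁ : 0 ≤ c₁) (hT : 0 ≤ T) (hK : 0 ≤ K) (hD : c * exp (-(K * s)) ≤ D)
    (hN : N ≤ exp (-(K * s)) * (T / s ^ 2) ^ m + 2 * m / s ^ 2 * M)
    (hM : M ≤ (2 * K / s) ^ (m - 1) * D
      + c₁ * (s ^ 2) ^ (1 - m) * exp (-(s ^ 2 * (2 * K / s) / 2))) :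
    (s ^ 2) ^ (m / 2) * (N / D)
      ≤ (T ^ m + 2 * m * c₁) / c / s ^ m + 2 * m * (2 * K) ^ (m - 1) / s := by
  have hD0 : 0 < D := (by positivity : 0 < c * exp (-(K * s))).trans_le hD
  have hX : 0 < s ^ m := by positivity
  have hTm : 0 ≤ T ^ m := rpow_nonneg hT m
  have hpow : (s ^ 2) ^ (m / 2) = s ^ m := by
    rw [← rpow_pow_comm hs.le, ← rpow_natCast, ← rpow_mul (by positivity)]
    ring_nf
  rw [div_rpow hT (by positivity), ← rpow_pow_comm hs.le] at hN
  rw [div_rpow (by positivity) hs.le, rpow_sub_one hs.ne' m,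
    rpow_sub (by positivity : 0 < s ^ 2) 1 m, rpow_one, ← rpow_pow_comm hs.le,
    show s ^ 2 * (2 * K / s) / 2 = K * s by field_simp] at hM
  rw [hpow, mul_div_assoc', div_le_iff₀ hD0]
  calc s ^ m * N
      ≤ s ^ m * (exp (-(K * s)) * (T ^ m / (s ^ m) ^ 2) + 2 * m / s ^ 2
          * ((2 * K) ^ (m - 1) / (s ^ m / s) * D
            + c₁ * (s ^ 2 / (s ^ m) ^ 2) * exp (-(K * s)))) := by
        gcongr
        exact hN.trans (by gcongr)
    _ = (T ^ m + 2 * m * c₁) / s ^ m * exp (-(K * s)) + 2 * m * (2 * K) ^ (m - 1) / s * D := by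
        field_simp
        ring
    _ ≤ (T ^ m + 2 * m * c₁) / s ^ m * (D / c) + 2 * m * (2 * K) ^ (m - 1) / s * D := by
        gcongr
        rwa [le_div_iff₀ hc, mul_comm]
    _ = ((T ^ m + 2 * m * c₁) / c / s ^ m + 2 * m * (2 * K) ^ (m - 1) / s) * D := by ring

lemma eventually_rpow_mul_integral_upperGamma_div_le {β m a b : ℝ} {F : ℝ → ℝ} (hβ : 0 < β)
    (hm : 1 ≤ m) (ha : 0 < a) (hb : 0 ≤ b) (hF₀ : ∀ t, 0 ≤ F t) (hF₁ : ∀ t, F t ≤ 1)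
    (hFm : Measurable F) (hF : ∀ᶠ t in 𝓝[>] 0, exp (-b / t) ≤ F t ∧ F t ≤ exp (-a / t)) :
    ∃ C₁ C₂ : ℝ, ∀ᶠ s in atTop, (s ^ 2) ^ (m / 2)
        * ((∫ t in Ioi 0, m * t ^ (m - 1) * (upperGamma β (s ^ 2 * t) / Gamma β) * F t)
          / ∫ t in Ioi 0, gammaPDFReal β (s ^ 2) t * F t) ≤ C₁ / s ^ m + C₂ / s := by
  obtain ⟨t₀, ht₀, hFt₀⟩ := mem_nhdsGT_iff_exists_Ioo_subset.mp hF
  have hFnorm : ∀ t, ‖F t‖ ≤ 1 := fun t => by rw [norm_of_nonneg (hF₀ t)]; exact hF₁ t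
  set T := 2 * β + 2
  set K := b + 2
  set c := min 1 (2 ^ (β - 1)) / Gamma β
  have hT : 0 < T := by positivity
  have hc : 0 < c := div_pos (lt_min one_pos (by positivity)) (Gamma_pos_of_pos hβ)
  refine ⟨(T ^ m + 2 * m * (2 ^ (β + m - 1) * Gamma (β + m - 1) / Gamma β)) / c,
    2 * m * (2 * K) ^ (m - 1), ?_⟩
  filter_upwards [eventually_ge_atTop 1,
    ((tendsto_const_nhds (x := T)).div_atTop (tendsto_pow_atTop two_ne_zero)).eventually
      (gt_mem_nhds ht₀),
    ((tendsto_const_nhds (x := 2)).div_atTop tendsto_id).eventually (gt_mem_nhds ht₀),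
    eventually_ge_atTop (K * T / a)] with s hs1 hTs hst₀ hKs
  have hs : 0 < s := by linarith
  have hr : 0 < s ^ 2 := by positivity
  have hintD : IntegrableOn (fun t => gammaPDFReal β (s ^ 2) t * F t) (Ioi 0) := by
    simpa using integrableOn_rpow_mul_gammaPDFReal_mul (p := 0) hr (by linarith) hFm hFnorm
  have hD : c * exp (-(K * s)) ≤ ∫ t in Ioi 0, gammaPDFReal β (s ^ 2) t * F t := by
    refine le_trans ?_ (le_integral_gammaPDFReal_mul hβ hb hs hst₀ (fun t ht => (hFt₀ ht).1) hF₀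
      hintD)
    calc c * exp (-(K * s)) = c * 1 * exp (-(K * s)) := by ring
      _ ≤ c * s ^ β * exp (-(K * s)) := by gcongr; exact one_le_rpow hs1 hβ.le
  have hE : exp (-(a / T * s ^ 2)) ≤ exp (-(K * s)) := by
    rw [exp_le_exp, neg_le_neg_iff, div_mul_eq_mul_div, le_div_iff₀ hT]
    rw [div_le_iff₀ ha] at hKs
    nlinarith
  have hc₁ : 0 ≤ 2 ^ (β + m - 1) * Gamma (β + m - 1) / Gamma β :=
    div_nonneg (mul_nonneg (by positivity) (Gamma_pos_of_pos (by linarith)).le)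
      (Gamma_pos_of_pos hβ).le
  refine rpow_mul_div_le_of_bounds hm hs hc hc₁ hT.le (by positivity) hD ?_
    (integral_rpow_mul_gammaPDFReal_mul_le (A := 2 * K / s) hβ hr hm (by positivity) hF₀ hF₁ hintD)
  refine (integral_upperGamma_mul_le hβ hr hT (by linarith) ha.le (by linarith) hTs
    (fun t ht => (hFt₀ ht).2) hF₀
    (integrableOn_rpow_mul_gammaPDFReal_mul (p := m - 1) hr (by linarith) hFm hFnorm)).trans ?_
  gcongr

theorem tendsto_rpow_mul_integral_upperGamma_div_integral_gammaPDFReal {β m a b : ℝ}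
    {F : ℝ → ℝ} (hβ : 0 < β) (hm : 1 ≤ m) (ha : 0 < a) (hb : 0 ≤ b)
    (hF₀ : ∀ t, 0 ≤ F t) (hF₁ : ∀ t, F t ≤ 1) (hFm : Measurable F)
    (hF : ∀ᶠ t in 𝓝[>] 0, exp (-b / t) ≤ F t ∧ F t ≤ exp (-a / t)) :
    Tendsto (fun r => r ^ (m / 2)
        * ((∫ t in Ioi 0, m * t ^ (m - 1) * (upperGamma β (r * t) / Gamma β) * F t)
          / ∫ t in Ioi 0, gammaPDFReal β r t * F t)) atTop (𝓝 0) := by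
  obtain ⟨C₁, C₂, hC⟩ := eventually_rpow_mul_integral_upperGamma_div_le hβ hm ha hb hF₀ hF₁ hFm hF
  have hbound : Tendsto (fun s : ℝ => C₁ / s ^ m + C₂ / s) atTop (𝓝 0) := by
    simpa using ((tendsto_const_nhds (x := C₁)).div_atTop (tendsto_rpow_atTop (by linarith))).add
      ((tendsto_const_nhds (x := C₂)).div_atTop tendsto_id)
  refine squeeze_zero' ?_ ?_ (hbound.comp tendsto_sqrt_atTop)
  · filter_upwards [eventually_gt_atTop 0] with r hr
    have hN : 0 ≤ ∫ t in Ioi 0, m * t ^ (m - 1) * (upperGamma β (r * t) / Gamma β) * F t :=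
      setIntegral_nonneg measurableSet_Ioi fun t (ht : 0 < t) => by
        have := upperGamma_nonneg β (mul_pos hr ht).le
        have := rpow_nonneg ht.le (m - 1)
        have := hF₀ t
        positivity
    have hD : 0 ≤ ∫ t in Ioi 0, gammaPDFReal β r t * F t :=
      setIntegral_nonneg measurableSet_Ioi fun t _ =>
        mul_nonneg (gammaPDFReal_nonneg hβ hr t) (hF₀ t)
    have := rpow_nonneg hr.le (m / 2)
    positivity
  filter_upwards [eventually_ge_atTop 0, tendsto_sqrt_atTop.eventually hC] with r hr hCr
  rwa [sq_sqrt hr] at hCr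

theorem subtracted_term_negligible_general
    (Ω : Type*) [MeasureSpace Ω] [IsProbabilityMeasure (ℙ : Measure Ω)]
    (τ : Ω → ℝ)
    (F : ℝ → ℝ) (hF : ∀ t, F t = (ℙ {ω | τ ω ≤ t}).toReal)
    (C : ℝ) (hC : 0 < C)
    (hlog : Tendsto (fun t : ℝ => t * Real.log (F t)) (nhdsWithin 0 (Set.Ioi 0))
      (nhds (-C)))
    (β : ℝ) (hβ : 0 < β)
    (Sσ fσ : ℝ → ℝ → ℝ)
    (hSσ : ∀ lam t, Sσ lam t
      = (∫ u in Set.Ioi (lam * t), u ^ (β - 1) * Real.exp (-u)) / Real.Gamma β)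
    (hfσ : ∀ lam t, fσ lam t
      = lam ^ β * t ^ (β - 1) * Real.exp (-lam * t) / Real.Gamma β)
    (m : ℝ) (hm : 1 ≤ m) :
    Tendsto (fun lam : ℝ =>
        lam ^ (m / 2)
          * ((∫ t in Set.Ioi (0:ℝ), m * t ^ (m - 1) * Sσ lam t * F t)
              / ∫ t in Set.Ioi (0:ℝ), fσ lam t * F t))
      atTop (nhds 0) := by
  have hF₀ : ∀ t, 0 ≤ F t := fun t => (hF t) ▸ ENNReal.toReal_nonneg
  have hF₁ : ∀ t, F t ≤ 1 := fun t => by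
    rw [hF t]
    exact ENNReal.toReal_le_of_le_ofReal zero_le_one (by simpa using prob_le_one)
  have hFm : Measurable F := Monotone.measurable fun s t hst => by
    rw [hF, hF]
    exact ENNReal.toReal_mono (measure_ne_top _ _) (measure_mono fun ω h => le_trans h hst)
  obtain rfl : Sσ = fun lam t => upperGamma β (lam * t) / Gamma β := funext₂ hSσ
  have hD : ∀ lam, ∫ t in Ioi 0, fσ lam t * F t = ∫ t in Ioi 0, gammaPDFReal β lam t * F t :=
    fun lam => setIntegral_congr_fun measurableSet_Ioi fun t (ht : 0 < t) => by
      rw [hfσ, gammaPDFReal_of_nonneg ht.le, neg_mul]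
      ring
  simp only [hD]
  exact tendsto_rpow_mul_integral_upperGamma_div_integral_gammaPDFReal hβ hm (half_pos hC)
    (by positivity) hF₀ hF₁ hFm (eventually_exp_neg_div_le_and_le_exp_neg_div hF₀
      (half_pos hC).le (half_lt_self hC) (by linarith : C < 2 * C) hlog)

/-- The subtracted term in the conditional-moment formula is negligible: with
`S_σ(t) = Γ(β, λt)/Γ(β)` and `f_σ(t) = λ^β t^{β−1} e^{−λt}/Γ(β)`, for every `m ≥ 1`,
`λ^{m/2} (∫₀^∞ m t^{m−1} S_σ(t) F(t) dt)/(∫₀^∞ f_σ(t) F(t) dt) → 0` as `λ → ∞`. -/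
theorem subtracted_term_negligible
    (Ω : Type*) [MeasureSpace Ω] [IsProbabilityMeasure (ℙ : Measure Ω)]
    (τ : Ω → ℝ) (hτ : Measurable τ)
    (F : ℝ → ℝ) (hF : ∀ t, F t = (ℙ {ω | τ ω ≤ t}).toReal)
    (C : ℝ) (hC : 0 < C)
    (hlog : Tendsto (fun t : ℝ => t * Real.log (F t)) (nhdsWithin 0 (Set.Ioi 0))
      (nhds (-C)))
    (β : ℝ) (hβ : 0 < β)
    (Sσ fσ : ℝ → ℝ → ℝ)
    (hSσ : ∀ lam t, Sσ lam t
      = (∫ u in Set.Ioi (lam * t), u ^ (β - 1) * Real.exp (-u)) / Real.Gamma β)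
    (hfσ : ∀ lam t, fσ lam t
      = lam ^ β * t ^ (β - 1) * Real.exp (-lam * t) / Real.Gamma β)
    (m : ℝ) (hm : 1 ≤ m) :
    Tendsto (fun lam : ℝ =>
        lam ^ (m / 2)
          * ((∫ t in Set.Ioi (0:ℝ), m * t ^ (m - 1) * Sσ lam t * F t)
              / ∫ t in Set.Ioi (0:ℝ), fσ lam t * F t))
      atTop (nhds 0) :=
  subtracted_term_negligible_general Ω τ F hF C hC hlog β hβ Sσ fσ hSσ hfσ m hm
end

section
/- For any p > −1 and C > 0, ∫₀^∞ s^p e^{−√(λC)(s + 1/s)} ds is asymptotic to √(π/√(λC)) · e^{−2√(λC)} as λ → ∞. -/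
open MeasureTheory Filter Real Set Topology

/-!
Put `a = √(λC)` and `b = √a`. The substitution `s = 1 + u / b` turns `a (s + 1/s)` into
`2a + u² / (1 + u/b)`, so the integral is `b⁻¹ e^{-2a} ∫_{-b}^∞ (1 + u/b)^p e^{-u²/(1+u/b)} du`.
As `b → ∞` this integrand tends to `e^{-u²}` and, for large `b`, is dominated by a multiple of
`e^{-|u|/2}`; dominated convergence gives the limit `∫ e^{-u²} = √π`, and `√(π/a) = √π / b`.
-/

noncomputable def laplaceIntegrand (p b u : ℝ) : ℝ :=
  (1 + u / b) ^ p * exp (-(u ^ 2 / (1 + u / b)))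

lemma one_add_div_pos {b u : ℝ} (hb : 0 < b) (hu : -b < u) : 0 < 1 + u / b := by
  rw [one_add_div hb.ne']
  exact div_pos (by linarith) hb

lemma setIntegral_rpow_mul_exp_neg_sq_mul_add_inv (p : ℝ) {b : ℝ} (hb : 0 < b) :
    ∫ s in Ioi (0 : ℝ), s ^ p * exp (-b ^ 2 * (s + 1 / s))
      = b⁻¹ * exp (-2 * b ^ 2) * ∫ u in Ioi (-b), laplaceIntegrand p b u := by
  have himage : (fun u : ℝ => 1 + u / b) '' Ioi (-b) = Ioi 0 := by
    ext s
    refine ⟨?_, fun hs => ⟨b * (s - 1), ?_, by field_simp; ring⟩⟩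
    · rintro ⟨u, hu, rfl⟩
      exact one_add_div_pos hb hu
    · simp only [mem_Ioi] at hs ⊢
      nlinarith
  rw [← himage, integral_image_eq_integral_abs_deriv_smul measurableSet_Ioi
      (fun u _ => ((hasDerivAt_id' u).div_const b).const_add 1 |>.hasDerivWithinAt)
      (fun u _ v _ h => by simpa [hb.ne'] using h), ← integral_const_mul]
  refine setIntegral_congr_fun measurableSet_Ioi fun u hu => ?_
  have hbu : 0 < b + u := by rw [mem_Ioi] at hu; linarith
  -- `b² (s + 1/s) = 2b² + b² (s - 1)² / s` with `b (s - 1) = u`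
  have hexponent : -b ^ 2 * ((1 + u / b) + 1 / (1 + u / b))
      = -2 * b ^ 2 + -(u ^ 2 / (1 + u / b)) := by
    field_simp [hbu.ne']
    ring
  rw [laplaceIntegrand, hexponent, exp_add, smul_eq_mul, abs_of_pos (by positivity)]
  ring

lemma rpow_mul_exp_neg_inv_le (p : ℝ) {s : ℝ} (hs₀ : 0 < s) (hs₁ : s ≤ 1) :
    s ^ p * exp (-(2 * s)⁻¹) ≤ exp (|p| * log (2 * |p| + 1)) := by
  set K := 2 * |p| + 1
  have hK : 0 < K := by positivity
  have hlog_nonneg : 0 ≤ -log s := neg_nonneg.mpr (log_nonpos hs₀.le hs₁)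
  -- `log x ≤ x - 1` at `x = s⁻¹ / K`; `K = 2|p| + 1` is chosen so that `|p| s⁻¹ / K ≤ (2s)⁻¹`
  have hlog : -log s ≤ s⁻¹ / K + log K - 1 := by
    have := log_le_sub_one_of_pos (div_pos (inv_pos.mpr hs₀) hK)
    rw [log_div (inv_pos.mpr hs₀).ne' hK.ne', log_inv] at this
    linarith
  have hK_ge : |p| * (s⁻¹ / K) ≤ (2 * s)⁻¹ := by
    rw [mul_inv, mul_div_assoc', div_le_iff₀ hK]
    have : 0 < s⁻¹ := inv_pos.mpr hs₀
    nlinarith [abs_nonneg p]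
  rw [rpow_def_of_pos hs₀, ← exp_add, exp_le_exp]
  have hlogK : 0 ≤ log K := log_nonneg (by linarith [abs_nonneg p])
  nlinarith [neg_abs_le p, le_abs_self p, mul_le_mul_of_nonneg_left hlog (abs_nonneg p)]

lemma laplaceIntegrand_le_of_nonpos (p : ℝ) {b u : ℝ} (hb : 1 ≤ b) (hu : -b < u) (hu₀ : u ≤ 0) :
    laplaceIntegrand p b u ≤ exp (|p| * log (2 * |p| + 1) + 9 / 8) * exp (-(1 / 2) * |u|) := by
  set s := 1 + u / b
  have hs₀ : 0 < s := one_add_div_pos (by linarith) hu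
  have hs₁ : s ≤ 1 := by
    have : u / b ≤ 0 := div_nonpos_of_nonpos_of_nonneg hu₀ (by linarith)
    linarith
  have hsu : (1 - s) ^ 2 ≤ u ^ 2 := by
    have hu_eq : u = -(b * (1 - s)) := by simp only [s]; field_simp; ring
    rw [hu_eq, neg_sq, mul_pow]
    exact le_mul_of_one_le_left (sq_nonneg _) (one_le_pow₀ hb)
  -- `u² / s ≥ u² / 2 + (1 - s)² / (2s)`, and `(1 - s)² / (2s) ≥ 1 / (2s) - 1`
  have hexponent : -(u ^ 2 / s) ≤ -(2 * s)⁻¹ + (9 / 8 + -(1 / 2) * |u|) := by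
    rw [abs_of_nonpos hu₀, div_eq_mul_inv, mul_inv]
    have ht : s * s⁻¹ = 1 := mul_inv_cancel₀ hs₀.ne'
    have ht₁ : 1 ≤ s⁻¹ := one_le_inv₀ hs₀ |>.mpr hs₁
    nlinarith [mul_le_mul_of_nonneg_right hsu (inv_nonneg.mpr hs₀.le), sq_nonneg (u + 1 / 2),
      mul_nonneg (sub_nonneg.mpr ht₁) (sq_nonneg u)]
  calc laplaceIntegrand p b u ≤ s ^ p * (exp (-(2 * s)⁻¹) * exp (9 / 8 + -(1 / 2) * |u|)) := by
        rw [laplaceIntegrand, ← exp_add]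
        gcongr
    _ ≤ exp (|p| * log (2 * |p| + 1)) * exp (9 / 8) * exp (-(1 / 2) * |u|) := by
        rw [exp_add, ← mul_assoc, ← mul_assoc]
        gcongr
        exact rpow_mul_exp_neg_inv_le p hs₀ hs₁
    _ = _ := by rw [← exp_add]

lemma laplaceIntegrand_le_of_nonneg (p : ℝ) {b u : ℝ} (hb : 1 ≤ b) (hbp : 2 * |p| ≤ b)
    (hu₀ : 0 ≤ u) :
    laplaceIntegrand p b u ≤ exp (|p| * log (2 * |p| + 1) + 9 / 8) * exp (-(1 / 2) * |u|) := by
  set s := 1 + u / b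
  have hb₀ : 0 < b := by linarith
  have hs₁ : 1 ≤ s := le_add_of_nonneg_right (div_nonneg hu₀ hb₀.le)
  have hlog : log s * p ≤ u / 2 := by
    have hlog_s : log s ≤ u / b := by linarith [log_le_sub_one_of_pos (by linarith : 0 < s)]
    have hlog₀ : 0 ≤ log s := log_nonneg hs₁
    calc log s * p ≤ log s * |p| := mul_le_mul_of_nonneg_left (le_abs_self p) hlog₀
      _ ≤ u / b * |p| := mul_le_mul_of_nonneg_right hlog_s (abs_nonneg p)
      _ ≤ u / 2 := by
        rw [div_mul_eq_mul_div, div_le_div_iff₀ hb₀ two_pos]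
        nlinarith
  have hexponent : -(u ^ 2 / s) ≤ 1 - u := by
    rw [neg_le, le_div_iff₀ (by linarith)]
    have : s ≤ 1 + u := by
      simp only [s]; gcongr; exact div_le_self hu₀ hb
    rcases le_total u 1 with h | h <;> nlinarith
  have hconst : 0 ≤ |p| * log (2 * |p| + 1) :=
    mul_nonneg (abs_nonneg p) (log_nonneg (by linarith [abs_nonneg p]))
  rw [laplaceIntegrand, rpow_def_of_pos (by linarith), ← exp_add, ← exp_add, exp_le_exp,
    abs_of_nonneg hu₀]
  linarith

lemma laplaceIntegrand_le (p : ℝ) {b u : ℝ} (hb : 1 ≤ b) (hbp : 2 * |p| ≤ b) (hu : -b < u) :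
    laplaceIntegrand p b u ≤ exp (|p| * log (2 * |p| + 1) + 9 / 8) * exp (-(1 / 2) * |u|) := by
  rcases le_total u 0 with hu₀ | hu₀
  · exact laplaceIntegrand_le_of_nonpos p hb hu hu₀
  · exact laplaceIntegrand_le_of_nonneg p hb hbp hu₀

lemma integrable_exp_neg_mul_abs {c : ℝ} (hc : 0 < c) :
    Integrable fun x : ℝ => exp (-c * |x|) := by
  rw [← integrableOn_univ, ← Iic_union_Ioi (a := 0), integrableOn_union]
  constructor
  · refine (integrableOn_exp_mul_Iic hc 0).congr_fun (fun x hx => ?_) measurableSet_Iic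
    rw [abs_of_nonpos hx]
    ring_nf
  · refine (integrableOn_exp_mul_Ioi (neg_neg_of_pos hc) 0).congr_fun (fun x hx => ?_)
      measurableSet_Ioi
    rw [abs_of_pos hx]

lemma tendsto_laplaceIntegrand (p u : ℝ) :
    Tendsto (fun b => laplaceIntegrand p b u) atTop (𝓝 (exp (-u ^ 2))) := by
  have hcont : ContinuousAt (fun y : ℝ => (1 + y) ^ p * exp (-(u ^ 2 / (1 + y)))) 0 := by
    fun_prop (disch := norm_num)
  simpa [laplaceIntegrand, Function.comp_def] using
    hcont.tendsto.comp (tendsto_const_nhds.div_atTop tendsto_id)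

lemma tendsto_setIntegral_laplaceIntegrand (p : ℝ) :
    Tendsto (fun b => ∫ u in Ioi (-b), laplaceIntegrand p b u) atTop (𝓝 (√π)) := by
  set K := exp (|p| * log (2 * |p| + 1) + 9 / 8)
  have hmeas : ∀ b, AEStronglyMeasurable ((Ioi (-b)).indicator (laplaceIntegrand p b)) := by
    intro b
    unfold laplaceIntegrand
    exact (Measurable.indicator (by fun_prop) measurableSet_Ioi).aestronglyMeasurable
  have hbound : ∀ᶠ b in atTop, ∀ u, ‖(Ioi (-b)).indicator (laplaceIntegrand p b) u‖
      ≤ K * exp (-(1 / 2) * |u|) := by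
    filter_upwards [eventually_ge_atTop (max 1 (2 * |p|))] with b hb u
    rw [max_le_iff] at hb
    by_cases hu : u ∈ Ioi (-b)
    · have hs := one_add_div_pos (by linarith) hu
      rw [indicator_of_mem hu, norm_of_nonneg (by unfold laplaceIntegrand; positivity)]
      exact laplaceIntegrand_le p hb.1 hb.2 hu
    · rw [indicator_of_notMem hu, norm_zero]
      positivity
  have hlimit : ∀ u, Tendsto (fun b => (Ioi (-b)).indicator (laplaceIntegrand p b) u) atTop
      (𝓝 (exp (-u ^ 2))) := fun u => (tendsto_laplaceIntegrand p u).congr' <| by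
    filter_upwards [eventually_gt_atTop (-u)] with b hb
    exact (indicator_of_mem (neg_lt.mp hb) _).symm
  have hgaussian : ∫ u : ℝ, exp (-u ^ 2) = √π := by simpa using integral_gaussian 1
  simpa [integral_indicator measurableSet_Ioi, hgaussian] using
    tendsto_integral_filter_of_dominated_convergence _ (.of_forall hmeas)
      (hbound.mono fun _ h => .of_forall h)
      ((integrable_exp_neg_mul_abs one_half_pos).const_mul K) (.of_forall hlimit)

lemma tendsto_setIntegral_rpow_mul_exp_neg_mul_add_inv_div (p : ℝ) :
    Tendsto (fun a => (∫ s in Ioi (0 : ℝ), s ^ p * exp (-a * (s + 1 / s)))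
      / (√(π / a) * exp (-2 * a))) atTop (𝓝 1) := by
  have hπ : √π ≠ 0 := sqrt_ne_zero'.mpr pi_pos
  have h := ((tendsto_setIntegral_laplaceIntegrand p).div_const √π).comp tendsto_sqrt_atTop
  rw [div_self hπ] at h
  refine h.congr' ?_
  filter_upwards [eventually_gt_atTop 0] with a ha
  obtain ⟨b, hb, rfl⟩ : ∃ b, 0 < b ∧ b ^ 2 = a := ⟨√a, sqrt_pos.mpr ha, sq_sqrt ha.le⟩
  rw [Function.comp_apply, sqrt_sq hb.le, setIntegral_rpow_mul_exp_neg_sq_mul_add_inv p hb,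
    sqrt_div pi_pos.le, sqrt_sq hb.le]
  field_simp

theorem laplace_asymptotics_general
    (p C : ℝ) (hC : 0 < C) :
    Tendsto (fun lam : ℝ =>
        (∫ s in Set.Ioi (0:ℝ), s ^ p * Real.exp (-Real.sqrt (lam * C) * (s + 1 / s)))
          / (Real.sqrt (Real.pi / Real.sqrt (lam * C))
              * Real.exp (-2 * Real.sqrt (lam * C))))
      atTop (nhds 1) :=
  (tendsto_setIntegral_rpow_mul_exp_neg_mul_add_inv_div p).comp
    (tendsto_sqrt_atTop.comp (tendsto_id.atTop_mul_const hC))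

/-- Laplace-method asymptotics:
`∫₀^∞ s^p e^{−√(λC)(s+1/s)} ds ∼ √(π/√(λC)) e^{−2√(λC)}` as `λ → ∞`. -/
theorem laplace_asymptotics
    (p C : ℝ) (hp : -1 < p) (hC : 0 < C) :
    Tendsto (fun lam : ℝ =>
        (∫ s in Set.Ioi (0:ℝ), s ^ p * Real.exp (-Real.sqrt (lam * C) * (s + 1 / s)))
          / (Real.sqrt (Real.pi / Real.sqrt (lam * C))
              * Real.exp (-2 * Real.sqrt (lam * C))))
      atTop (nhds 1) :=
  laplace_asymptotics_general p C hC
end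

section
/- Let τ be a positive random variable with P(τ ≤ t) ∼ A t^p as t → 0+ for some A > 0 and p > 0, and let σ be an independent exponential random variable with rate λ > 0. Then for any m > 0, E[τ^m | τ < σ] ∼ (Γ(m+p)/Γ(p)) · λ^{−m} as λ → ∞. -/
/-!
Let `μ` be the law of `τ` and `F t = μ (-∞, t]`. By independence,
`E[τ^s; τ < σ] = ∫ x^s e^{-λx} dμ(x)`, and `s = 0` gives `P(τ < σ)`. Rescaling `x ↦ λx` and
integrating by parts against `F` (write `x^s e^{-x} = ∫_x^∞ (t^s - s t^{s-1}) e^{-t} dt` and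
swap the integrals) turns `λ^{s+p} ∫ x^s e^{-λx} dμ` into
`∫_0^∞ (u^s - s u^{s-1}) e^{-u} λ^p F(u/λ) du`. As `λ → ∞`, `λ^p F(u/λ) → A u^p` with the
domination `λ^p |F(u/λ)| ≤ C u^p`, so the limit is `A ∫_0^∞ (u^s - s u^{s-1}) e^{-u} u^p du
= A p Γ(s+p)`. Dividing the cases `s = m` and `s = 0` gives `λ^{-m} Γ(m+p) / Γ(p)`.
-/

open MeasureTheory ProbabilityTheory Filter Set Real Topology

lemma integrableOn_rpow_mul_exp_neg {s : ℝ} (hs : -1 < s) :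
    IntegrableOn (fun t : ℝ => t ^ s * exp (-t)) (Ioi 0) := by
  simpa using integrableOn_rpow_mul_exp_neg_rpow hs one_pos

lemma integral_rpow_mul_exp_neg {s : ℝ} (hs : -1 < s) :
    ∫ t in Ioi 0, t ^ s * exp (-t) = Gamma (s + 1) := by
  simp_rw [Gamma_eq_integral (by linarith : 0 < s + 1), add_sub_cancel_right, mul_comm]

lemma hasDerivAt_rpow_mul_exp_neg {s t : ℝ} (ht : 0 < t) :
    HasDerivAt (fun t : ℝ => t ^ s * exp (-t)) ((s * t ^ (s - 1) - t ^ s) * exp (-t)) t := by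
  have hpow : HasDerivAt (fun t : ℝ => t ^ s) (s * t ^ (s - 1)) t :=
    hasDerivAt_rpow_const (Or.inl ht.ne')
  refine (hpow.mul (hasDerivAt_neg t).exp).congr_deriv ?_
  ring

lemma integrableOn_sub_rpow_mul_exp_neg {s : ℝ} (hs : 0 ≤ s) :
    IntegrableOn (fun t : ℝ => (t ^ s - s * t ^ (s - 1)) * exp (-t)) (Ioi 0) := by
  rcases hs.eq_or_lt with rfl | hs
  · simpa using integrableOn_rpow_mul_exp_neg neg_one_lt_zero
  · refine ((integrableOn_rpow_mul_exp_neg (s := s) (by linarith)).sub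
      ((integrableOn_rpow_mul_exp_neg (s := s - 1) (by linarith)).const_mul s)).congr
      (.of_forall fun t => ?_)
    simp only [Pi.sub_apply]
    ring

lemma integral_Ioi_sub_rpow_mul_exp_neg {s x : ℝ} (hs : 0 ≤ s) (hx : 0 < x) :
    ∫ t in Ioi x, (t ^ s - s * t ^ (s - 1)) * exp (-t) = x ^ s * exp (-x) := by
  have hderiv : ∀ t ∈ Ici x, HasDerivAt (fun t : ℝ => -(t ^ s * exp (-t)))
      ((t ^ s - s * t ^ (s - 1)) * exp (-t)) t := fun t ht => by
    refine (hasDerivAt_rpow_mul_exp_neg (hx.trans_le ht)).neg.congr_deriv ?_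
    ring
  have hlim : Tendsto (fun t : ℝ => -(t ^ s * exp (-t))) atTop (𝓝 0) := by
    simpa using (tendsto_rpow_mul_exp_neg_mul_atTop_nhds_zero s 1 one_pos).neg
  rw [integral_Ioi_of_hasDerivAt_of_tendsto' hderiv
    ((integrableOn_sub_rpow_mul_exp_neg hs).mono_set (Ioi_subset_Ioi hx.le)) hlim]
  ring

lemma sub_rpow_mul_exp_neg_mul_rpow {s p u : ℝ} (hu : 0 < u) :
    (u ^ s - s * u ^ (s - 1)) * exp (-u) * u ^ p
      = u ^ (s + p) * exp (-u) - s * (u ^ (s + p - 1) * exp (-u)) := by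
  rw [show s + p - 1 = s - 1 + p by ring, rpow_add hu, rpow_add hu]
  ring

lemma integrableOn_sub_rpow_mul_exp_neg_mul_rpow {s p : ℝ} (hs : 0 ≤ s) (hp : 0 < p) :
    IntegrableOn (fun u => (u ^ s - s * u ^ (s - 1)) * exp (-u) * u ^ p) (Ioi 0) :=
  ((integrableOn_rpow_mul_exp_neg (s := s + p) (by linarith)).sub
    ((integrableOn_rpow_mul_exp_neg (s := s + p - 1) (by linarith)).const_mul s)).congr_fun
    (fun _ hu => (sub_rpow_mul_exp_neg_mul_rpow hu).symm) measurableSet_Ioi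

lemma integral_sub_rpow_mul_exp_neg_mul_rpow {s p : ℝ} (hs : 0 ≤ s) (hp : 0 < p) :
    ∫ u in Ioi 0, (u ^ s - s * u ^ (s - 1)) * exp (-u) * u ^ p = p * Gamma (s + p) := by
  rw [setIntegral_congr_fun measurableSet_Ioi fun _ hu => sub_rpow_mul_exp_neg_mul_rpow hu,
    integral_sub (integrableOn_rpow_mul_exp_neg (by linarith))
      ((integrableOn_rpow_mul_exp_neg (by linarith)).const_mul s),
    integral_const_mul, integral_rpow_mul_exp_neg (by linarith),
    integral_rpow_mul_exp_neg (by linarith), sub_add_cancel,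
    Gamma_add_one (by positivity)]
  ring

lemma integral_setIntegral_Ici_eq {μ : Measure ℝ} [IsFiniteMeasure μ] {g : ℝ → ℝ}
    (hg : Integrable g) :
    ∫ x, (∫ t in Ici x, g t) ∂μ = ∫ t, g t * μ.real (Iic t) := by
  have hS : MeasurableSet {q : ℝ × ℝ | q.1 ≤ q.2} := measurableSet_le measurable_fst measurable_snd
  have hint : Integrable (Function.uncurry fun x t => {q : ℝ × ℝ | q.1 ≤ q.2}.indicator
      (fun q => g q.2) (x, t)) (μ.prod volume) := (hg.comp_snd μ).indicator hS
  calc ∫ x, (∫ t in Ici x, g t) ∂μ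
      = ∫ x, (∫ t, {q : ℝ × ℝ | q.1 ≤ q.2}.indicator (fun q => g q.2) (x, t)) ∂μ := by
        refine integral_congr_ae (.of_forall fun x => ?_)
        dsimp only
        rw [← integral_indicator measurableSet_Ici]
        rfl
    _ = ∫ t, (∫ x, {q : ℝ × ℝ | q.1 ≤ q.2}.indicator (fun q => g q.2) (x, t) ∂μ) :=
        integral_integral_swap hint
    _ = ∫ t, g t * μ.real (Iic t) := by
        refine integral_congr_ae (.of_forall fun t => ?_)
        change ∫ x, (Iic t).indicator (fun _ => g t) x ∂μ = _
        rw [integral_indicator_const _ measurableSet_Iic, smul_eq_mul, mul_comm]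

lemma integral_rpow_mul_exp_neg_eq_setIntegral_mul_measureReal_Iic {μ : Measure ℝ}
    [IsFiniteMeasure μ] (hμ : ∀ᵐ x ∂μ, 0 < x) {s : ℝ} (hs : 0 ≤ s) :
    ∫ x, x ^ s * exp (-x) ∂μ
      = ∫ t in Ioi 0, (t ^ s - s * t ^ (s - 1)) * exp (-t) * μ.real (Iic t) := by
  set g : ℝ → ℝ := fun t => (t ^ s - s * t ^ (s - 1)) * exp (-t)
  calc ∫ x, x ^ s * exp (-x) ∂μ = ∫ x, (∫ t in Ici x, (Ioi 0).indicator g t) ∂μ := by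
        refine integral_congr_ae (hμ.mono fun x hx => ?_)
        dsimp only
        rw [setIntegral_indicator measurableSet_Ioi, inter_eq_left.2 (Ici_subset_Ioi.2 hx),
          integral_Ici_eq_integral_Ioi, integral_Ioi_sub_rpow_mul_exp_neg hs hx]
    _ = ∫ t, (Ioi 0).indicator g t * μ.real (Iic t) :=
        integral_setIntegral_Ici_eq
          ((integrable_indicator_iff measurableSet_Ioi).2 (integrableOn_sub_rpow_mul_exp_neg hs))
    _ = ∫ t in Ioi 0, g t * μ.real (Iic t) := by
        rw [← integral_indicator measurableSet_Ioi]
        congr 1 with t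
        exact (indicator_mul_left (Ioi 0) g fun t => μ.real (Iic t)).symm

lemma exists_abs_le_mul_rpow_of_tendsto_div_rpow {F : ℝ → ℝ} {A p B : ℝ} (hp : 0 ≤ p)
    (hB : ∀ t, |F t| ≤ B) (hF : Tendsto (fun t => F t / t ^ p) (𝓝[>] 0) (𝓝 A)) :
    ∃ C, ∀ t, 0 < t → |F t| ≤ C * t ^ p := by
  obtain ⟨δ, hδ, hsmall⟩ : ∃ δ > 0, Ioo 0 δ ⊆ {t | |F t / t ^ p| < |A| + 1} :=
    mem_nhdsGT_iff_exists_Ioo_subset.1 (hF.abs.eventually (gt_mem_nhds (lt_add_one _)))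
  have hB0 : 0 ≤ B := (abs_nonneg _).trans (hB 0)
  have hδp : 0 < δ ^ p := rpow_pos_of_pos hδ p
  refine ⟨|A| + 1 + B / δ ^ p, fun t ht => ?_⟩
  have htp : 0 < t ^ p := rpow_pos_of_pos ht p
  have hBδ : 0 ≤ B / δ ^ p * t ^ p := by positivity
  rcases lt_or_ge t δ with htδ | htδ
  · have hlt : |F t| < (|A| + 1) * t ^ p := by
      simpa [abs_div, abs_of_pos htp, div_lt_iff₀ htp] using hsmall ⟨ht, htδ⟩
    linarith
  · have hle : B ≤ B / δ ^ p * t ^ p := by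
      rw [div_mul_eq_mul_div, le_div_iff₀ hδp]
      exact mul_le_mul_of_nonneg_left (rpow_le_rpow hδ.le htδ hp) hB0
    have : 0 ≤ (|A| + 1) * t ^ p := by positivity
    linarith [hB t]

lemma tendsto_div_atTop_nhdsGT_zero {u : ℝ} (hu : 0 < u) :
    Tendsto (fun l : ℝ => u / l) atTop (𝓝[>] 0) :=
  tendsto_nhdsWithin_iff.2 ⟨tendsto_const_nhds.div_atTop tendsto_id,
    (eventually_gt_atTop 0).mono fun _ hl => div_pos hu hl⟩

theorem tendsto_rpow_mul_setIntegral_mul_comp_div {F φ : ℝ → ℝ} {A p B : ℝ} (hp : 0 ≤ p)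
    (hFm : Measurable F) (hB : ∀ t, |F t| ≤ B)
    (hF : Tendsto (fun t => F t / t ^ p) (𝓝[>] 0) (𝓝 A))
    (hφm : AEStronglyMeasurable φ (volume.restrict (Ioi 0)))
    (hφ : IntegrableOn (fun u => φ u * u ^ p) (Ioi 0)) :
    Tendsto (fun l => l ^ p * ∫ u in Ioi 0, φ u * F (u / l)) atTop
      (𝓝 (A * ∫ u in Ioi 0, φ u * u ^ p)) := by
  obtain ⟨C, hC⟩ := exists_abs_le_mul_rpow_of_tendsto_div_rpow hp hB hF
  have hlim : Tendsto (fun l => ∫ u in Ioi 0, φ u * (l ^ p * F (u / l))) atTop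
      (𝓝 (∫ u in Ioi 0, φ u * (A * u ^ p))) := by
    refine tendsto_integral_filter_of_dominated_convergence (fun u => C * ‖φ u * u ^ p‖)
      (.of_forall fun l => hφm.mul ?_) ?_ (hφ.norm.const_mul C) ?_
    · exact (hFm.comp (measurable_id.div_const l)).aestronglyMeasurable.const_mul _
    · filter_upwards [eventually_gt_atTop 0] with l hl
      filter_upwards [ae_restrict_mem measurableSet_Ioi] with u (hu : 0 < u)
      have hCu := hC (u / l) (div_pos hu hl)
      rw [div_rpow hu.le hl.le] at hCu
      rw [norm_mul, norm_mul, norm_mul, Real.norm_of_nonneg (rpow_nonneg hu.le p),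
        Real.norm_of_nonneg (rpow_nonneg hl.le p), Real.norm_eq_abs (F _)]
      calc ‖φ u‖ * (l ^ p * |F (u / l)|) ≤ ‖φ u‖ * (l ^ p * (C * (u ^ p / l ^ p))) := by
            gcongr
        _ = C * (‖φ u‖ * u ^ p) := by
            field_simp [(rpow_pos_of_pos hl p).ne']
    · filter_upwards [ae_restrict_mem measurableSet_Ioi] with u (hu : 0 < u)
      have hlim := ((hF.comp (tendsto_div_atTop_nhdsGT_zero hu)).const_mul (u ^ p)).const_mul (φ u)
      rw [mul_comm (u ^ p) A] at hlim
      refine hlim.congr' ?_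
      filter_upwards [eventually_gt_atTop 0] with l hl
      simp only [Function.comp_apply]
      rw [div_rpow hu.le hl.le]
      field_simp [(rpow_pos_of_pos hl p).ne', (rpow_pos_of_pos hu p).ne']
  simpa only [← integral_const_mul, mul_left_comm] using hlim

lemma rpow_mul_integral_rpow_mul_exp_neg_mul {μ : Measure ℝ} (hμ : ∀ᵐ x ∂μ, 0 < x)
    {s l : ℝ} (hl : 0 < l) :
    l ^ s * ∫ x, x ^ s * exp (-(l * x)) ∂μ = ∫ y, y ^ s * exp (-y) ∂(μ.map (l * ·)) := by
  rw [integral_map (measurable_const_mul l).aemeasurable (by fun_prop), ← integral_const_mul]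
  refine integral_congr_ae (hμ.mono fun x hx => ?_)
  simp only [mul_rpow hl.le hx.le, mul_assoc]

lemma measureReal_map_const_mul_Iic {μ : Measure ℝ} {l : ℝ} (hl : 0 < l) (u : ℝ) :
    (μ.map (l * ·)).real (Iic u) = μ.real (Iic (u / l)) := by
  rw [measureReal_def, measureReal_def,
    Measure.map_apply (measurable_const_mul l) measurableSet_Iic]
  congr 2
  ext x
  simp [le_div_iff₀ hl, mul_comm]

theorem tendsto_rpow_mul_integral_rpow_mul_exp_neg_mul {μ : Measure ℝ} [IsFiniteMeasure μ]
    (hμ : ∀ᵐ x ∂μ, 0 < x) {A p s : ℝ} (hp : 0 < p) (hs : 0 ≤ s)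
    (hF : Tendsto (fun t => μ.real (Iic t) / t ^ p) (𝓝[>] 0) (𝓝 A)) :
    Tendsto (fun l => l ^ (s + p) * ∫ x, x ^ s * exp (-(l * x)) ∂μ) atTop
      (𝓝 (A * p * Gamma (s + p))) := by
  have hFm : Measurable fun t => μ.real (Iic t) :=
    Monotone.measurable fun _ _ hab => measureReal_mono (Iic_subset_Iic.2 hab)
  have hFB : ∀ t, |μ.real (Iic t)| ≤ μ.real univ := fun t => by
    rw [abs_of_nonneg measureReal_nonneg]
    exact measureReal_mono (subset_univ _)
  have hlim := tendsto_rpow_mul_setIntegral_mul_comp_div hp.le hFm hFB hF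
    (φ := fun u => (u ^ s - s * u ^ (s - 1)) * exp (-u)) (by fun_prop)
    (integrableOn_sub_rpow_mul_exp_neg_mul_rpow hs hp)
  rw [integral_sub_rpow_mul_exp_neg_mul_rpow hs hp, ← mul_assoc] at hlim
  refine hlim.congr' ?_
  filter_upwards [eventually_gt_atTop 0] with l hl
  have hν : ∀ᵐ y ∂(μ.map (l * ·)), 0 < y :=
    (ae_map_iff (measurable_const_mul l).aemeasurable measurableSet_Ioi).2
      (hμ.mono fun x hx => mul_pos hl hx)
  rw [rpow_add hl, mul_comm (l ^ s), mul_assoc, rpow_mul_integral_rpow_mul_exp_neg_mul hμ hl,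
    integral_rpow_mul_exp_neg_eq_setIntegral_mul_measureReal_Iic hν hs]
  simp_rw [measureReal_map_const_mul_Iic hl]

lemma setLIntegral_lt_comp_eq_lintegral_mul_map_Ioi {Ω : Type*} [MeasurableSpace Ω]
    {P : Measure Ω} [IsFiniteMeasure P] {X Y : Ω → ℝ} (hX : Measurable X) (hY : Measurable Y)
    (hXY : IndepFun X Y P) {f : ℝ → ENNReal} (hf : Measurable f) :
    ∫⁻ ω in {ω | X ω < Y ω}, f (X ω) ∂P = ∫⁻ x, f x * P.map Y (Ioi x) ∂(P.map X) := by
  have hS : MeasurableSet {q : ℝ × ℝ | q.1 < q.2} :=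
    measurableSet_lt measurable_fst measurable_snd
  have hfS : Measurable ({q : ℝ × ℝ | q.1 < q.2}.indicator fun q => f q.1) :=
    (hf.comp measurable_fst).indicator hS
  calc ∫⁻ ω in {ω | X ω < Y ω}, f (X ω) ∂P
      = ∫⁻ ω, {q : ℝ × ℝ | q.1 < q.2}.indicator (fun q => f q.1) (X ω, Y ω) ∂P := by
        rw [← lintegral_indicator (measurableSet_lt hX hY)]
        rfl
    _ = ∫⁻ q, {q : ℝ × ℝ | q.1 < q.2}.indicator (fun q => f q.1) q
          ∂((P.map X).prod (P.map Y)) := by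
        rw [← (indepFun_iff_map_prod_eq_prod_map_map hX.aemeasurable hY.aemeasurable).1 hXY,
          lintegral_map hfS (hX.prodMk hY)]
    _ = ∫⁻ x, ∫⁻ y, {q : ℝ × ℝ | q.1 < q.2}.indicator (fun q => f q.1) (x, y)
          ∂(P.map Y) ∂(P.map X) := lintegral_prod _ hfS.aemeasurable
    _ = ∫⁻ x, f x * P.map Y (Ioi x) ∂(P.map X) := by
        refine lintegral_congr fun x => ?_
        change ∫⁻ y, (Ioi x).indicator (fun _ => f x) y ∂(P.map Y) = _
        rw [lintegral_indicator_const measurableSet_Ioi]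

lemma expMeasure_Ioi {r x : ℝ} (hr : 0 < r) (hx : 0 ≤ x) :
    expMeasure r (Ioi x) = ENNReal.ofReal (exp (-(r * x))) := by
  have := isProbabilityMeasure_expMeasure hr
  rw [← compl_Iic, prob_compl_eq_one_sub measurableSet_Iic, ← ofReal_cdf, cdf_expMeasure_eq hr,
    if_pos hx, ← ENNReal.ofReal_one, ← ENNReal.ofReal_sub _ (sub_nonneg.2 ?_), sub_sub_cancel]
  exact exp_le_one_iff.2 (neg_nonpos.2 (mul_nonneg hr.le hx))

lemma setIntegral_rpow_lt_eq_integral_rpow_mul_exp {Ω : Type*} [MeasurableSpace Ω]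
    {P : Measure Ω} [IsFiniteMeasure P] {X Y : Ω → ℝ} (hX : Measurable X) (hY : Measurable Y)
    (hXY : IndepFun X Y P) (hX0 : ∀ᵐ ω ∂P, 0 < X ω) {r : ℝ} (hr : 0 < r)
    (hYr : P.map Y = expMeasure r) (s : ℝ) :
    ∫ ω in {ω | X ω < Y ω}, X ω ^ s ∂P = ∫ x, x ^ s * exp (-(r * x)) ∂(P.map X) := by
  have hμ : ∀ᵐ x ∂(P.map X), 0 < x := (ae_map_iff hX.aemeasurable measurableSet_Ioi).2 hX0
  have hlint := setLIntegral_lt_comp_eq_lintegral_mul_map_Ioi hX hY hXY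
    (f := fun x => ENNReal.ofReal (x ^ s)) (by fun_prop)
  rw [integral_eq_lintegral_of_nonneg_ae
      (ae_restrict_of_ae (hX0.mono fun ω h => rpow_nonneg h.le s))
      (hX.pow_const s).aestronglyMeasurable.restrict,
    integral_eq_lintegral_of_nonneg_ae (hμ.mono fun x hx => by positivity) (by fun_prop),
    hlint, hYr]
  congr 1
  refine lintegral_congr_ae (hμ.mono fun x hx => ?_)
  dsimp only
  rw [expMeasure_Ioi hr hx.le, ← ENNReal.ofReal_mul (rpow_nonneg hx.le s)]

/-- If `P(τ ≤ t) ∼ A t^p` as `t → 0+` and `σ` is an independent exponential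
inactivation time with rate `λ`, then `E[τ^m | τ < σ] ∼ (Γ(m+p)/Γ(p)) λ^{−m}`
as `λ → ∞`. -/
theorem conditional_moment_algebraic_decay
    (Ω : Type*) [MeasureSpace Ω] [IsProbabilityMeasure (ℙ : Measure Ω)]
    (τ : Ω → ℝ) (hτ : Measurable τ) (hτpos : ∀ᵐ ω ∂ℙ, 0 < τ ω)
    (A p : ℝ) (hA : 0 < A) (hp : 0 < p)
    (halg : Tendsto (fun t : ℝ => (ℙ {ω | τ ω ≤ t}).toReal / (A * t ^ p))
      (nhdsWithin 0 (Set.Ioi 0)) (nhds 1))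
    (σ : ℝ → Ω → ℝ) (hσm : ∀ l, Measurable (σ l))
    (hσ : ∀ l, 0 < l → Measure.map (σ l) ℙ = expMeasure l)
    (hind : ∀ l, 0 < l → IndepFun τ (σ l) ℙ)
    (m : ℝ) (hm : 0 < m) :
    Tendsto (fun l : ℝ =>
        ((∫ ω in {ω | τ ω < σ l ω}, τ ω ^ m) / (ℙ {ω | τ ω < σ l ω}).toReal)
          / (Real.Gamma (m + p) / Real.Gamma p * l ^ (-m)))
      atTop (nhds 1) := by
  set μ : Measure ℝ := Measure.map τ ℙ
  have hμ : ∀ᵐ x ∂μ, 0 < x := (ae_map_iff hτ.aemeasurable measurableSet_Ioi).2 hτpos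
  have hF : Tendsto (fun t => μ.real (Iic t) / t ^ p) (𝓝[>] 0) (𝓝 A) := by
    have h := halg.const_mul A
    rw [mul_one] at h
    refine h.congr fun t => ?_
    rw [measureReal_def, Measure.map_apply hτ measurableSet_Iic, div_mul_eq_div_div_swap,
      mul_div_cancel₀ _ hA.ne']
    rfl
  have hN := tendsto_rpow_mul_integral_rpow_mul_exp_neg_mul hμ hp hm.le hF
  have hD := tendsto_rpow_mul_integral_rpow_mul_exp_neg_mul hμ hp le_rfl hF
  have hΓ : 0 < Gamma p := Gamma_pos_of_pos hp
  have hlim := (hN.div hD (by rw [zero_add]; positivity)).div_const (Gamma (m + p) / Gamma p)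
  rw [zero_add, mul_div_mul_left _ _ (by positivity),
    div_self (div_pos (Gamma_pos_of_pos (by positivity)) hΓ).ne'] at hlim
  refine hlim.congr' ?_
  filter_upwards [eventually_gt_atTop 0] with l hl
  have hmoment (s : ℝ) : ∫ ω in {ω | τ ω < σ l ω}, τ ω ^ s = ∫ x, x ^ s * exp (-(l * x)) ∂μ :=
    setIntegral_rpow_lt_eq_integral_rpow_mul_exp hτ (hσm l) (hind l hl) hτpos hl (hσ l hl) s
  have hprob : (ℙ {ω | τ ω < σ l ω}).toReal = ∫ x, x ^ (0 : ℝ) * exp (-(l * x)) ∂μ := by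
    simpa [measureReal_def] using hmoment 0
  rw [Pi.div_apply, hprob, hmoment, rpow_add hl, rpow_neg hl.le]
  field_simp
end

section
/- For one-dimensional Brownian motion with diffusivity D started at L > 0 on the half-line with a perfectly absorbing target at 0, the FPT τ has distribution F(t) = erfc(L/√(4Dt)), and if σ is an independent exponential inactivation time with rate λ, then E[τ | τ < σ] = L/(2√(Dλ)) exactly, for every λ > 0. -/
/-!
With `a = L / √(4D)` the hypothesis on the CDF identifies the law of `τ` as the Lévy law with
density `a t^{-3/2} e^{-a²/t} / √π` on `(0, ∞)`: substituting `t = a² / u²` turns it into the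
Gaussian tail that defines `erfc`. Independence and `P(σ > t) = e^{-λt}` turn `P(τ < σ)` and
`E[τ; τ < σ]` into the Laplace transforms `E e^{-λτ}` and `E τ e^{-λτ}`. After the same substitution
both are multiples of `∫₀^∞ e^{-(u - b/u)²} du` (resp. of the same integral with the factor `b/u²`),
`b = a√λ`, and the Cauchy–Schlömilch substitution `w = u - b/u` shows that both equal `√π / 2`.
Hence `E e^{-λτ} = e^{-2b}`, `E τ e^{-λτ} = (a/√λ) e^{-2b}`, and the ratio is `a / √λ`.
-/

open MeasureTheory ProbabilityTheory Filter

/-- The complementary error function `erfc(z) = (2/√π) ∫_z^∞ e^{−u²} du`. -/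
noncomputable def erfc (z : ℝ) : ℝ :=
  (2 / Real.sqrt Real.pi) * ∫ u in Set.Ioi z, Real.exp (-u ^ 2)

open Real Set
open scoped ENNReal Topology

lemma integrable_exp_neg_sq : Integrable fun u : ℝ => exp (-u ^ 2) := by
  simpa using integrable_exp_neg_mul_sq one_pos

lemma lintegral_exp_neg_sq : ∫⁻ w, ENNReal.ofReal (exp (-w ^ 2)) = ENNReal.ofReal √π := by
  rw [← ofReal_integral_eq_lintegral_ofReal integrable_exp_neg_sq
    (ae_of_all _ fun _ => (exp_pos _).le)]
  simpa using congrArg ENNReal.ofReal (integral_gaussian 1)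

lemma ofReal_erfc (z : ℝ) :
    ENNReal.ofReal (erfc z) = ∫⁻ u in Ici z, ENNReal.ofReal (2 / √π * exp (-u ^ 2)) := by
  rw [← setLIntegral_congr Ioi_ae_eq_Ici, ← ofReal_integral_eq_lintegral_ofReal
    (integrable_exp_neg_sq.const_mul _).integrableOn
    (ae_of_all _ fun _ => by positivity), integral_const_mul, erfc]

lemma tendsto_erfc_atTop : Tendsto erfc atTop (𝓝 0) := by
  have h := tendsto_setIntegral_of_antitone (μ := volume) (fun z : ℝ => measurableSet_Ioi)
    (fun _ _ h => Ioi_subset_Ioi h) ⟨0, integrable_exp_neg_sq.integrableOn⟩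
  have hempty : ⋂ z : ℝ, Ioi z = ∅ :=
    eq_empty_of_forall_notMem fun z hz => lt_irrefl z (mem_iInter.1 hz z)
  have := h.const_mul (2 / √π)
  rwa [hempty, Measure.restrict_empty, integral_zero_measure, mul_zero] at this

section ChangeOfVariables

variable {c : ℝ}

lemma lintegral_Ioi_comp_const_div (hc : 0 < c) (g : ℝ → ℝ≥0∞) :
    ∫⁻ u in Ioi 0, ENNReal.ofReal (c / u ^ 2) * g (c / u) = ∫⁻ u in Ioi 0, g u := by
  have hinv : Function.Involutive fun u : ℝ => c / u := fun u => div_div_cancel₀ hc.ne'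
  have himage : (fun u : ℝ => c / u) '' Ioi 0 = Ioi 0 := by
    rw [image_eq_preimage_of_inverse hinv hinv]
    ext u
    simp [hc]
  have hderiv : ∀ u ∈ Ioi (0 : ℝ), HasDerivWithinAt (fun u => c / u) (-(c / u ^ 2)) (Ioi 0) u :=
    fun u hu => (((hasDerivAt_const u c).fun_div (hasDerivAt_id' u) (ne_of_gt hu)).congr_deriv
      (by ring)).hasDerivWithinAt
  conv_rhs => rw [← himage]
  rw [lintegral_image_eq_lintegral_abs_deriv_mul measurableSet_Ioi hderiv hinv.injective.injOn]
  refine setLIntegral_congr_fun measurableSet_Ioi fun u hu => ?_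
  rw [abs_neg, abs_of_pos (div_pos hc (pow_pos hu 2))]

lemma image_const_div_sq_Ici (hc : 0 < c) {r : ℝ} (hr : 0 < r) :
    (fun u : ℝ => c / u ^ 2) '' Ici r = Ioc 0 (c / r ^ 2) := by
  ext t
  constructor
  · rintro ⟨u, hu, rfl⟩
    exact ⟨by have := hr.trans_le hu; positivity,
      div_le_div_of_nonneg_left hc.le (by positivity) (pow_le_pow_left₀ hr.le hu 2)⟩
  · rintro ⟨ht, htr⟩
    refine ⟨√(c / t), ?_, by simp only; rw [sq_sqrt (by positivity)]; field_simp⟩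
    rw [mem_Ici, ← sqrt_sq hr.le]
    exact sqrt_le_sqrt ((le_div_iff₀ ht).2 (by rwa [le_div_iff₀ (by positivity), mul_comm] at htr))

lemma image_const_div_sq_Ioi (hc : 0 < c) : (fun u : ℝ => c / u ^ 2) '' Ioi 0 = Ioi 0 := by
  refine Subset.antisymm ?_ fun t (ht : 0 < t) => ?_
  · rintro _ ⟨u, hu, rfl⟩
    exact div_pos hc (pow_pos hu 2)
  · obtain ⟨u, hu, rfl⟩ : t ∈ (fun u : ℝ => c / u ^ 2) '' Ici √(c / t) := by
      rw [image_const_div_sq_Ici hc (by positivity), sq_sqrt (by positivity)]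
      exact ⟨ht, (div_div_cancel₀ hc.ne').ge⟩
    exact ⟨u, (sqrt_pos.2 (by positivity)).trans_le hu, rfl⟩

lemma lintegral_image_const_div_sq (hc : 0 < c) {s : Set ℝ} (hs : MeasurableSet s)
    (hs0 : s ⊆ Ioi 0) (g : ℝ → ℝ≥0∞) :
    ∫⁻ t in (fun u => c / u ^ 2) '' s, g t
      = ∫⁻ u in s, ENNReal.ofReal (2 * c / u ^ 3) * g (c / u ^ 2) := by
  have hderiv : ∀ u ∈ s, HasDerivWithinAt (fun u => c / u ^ 2) (-(2 * c / u ^ 3)) s u := by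
    intro u hu
    have hu : 0 < u := hs0 hu
    exact (((hasDerivAt_const u c).fun_div (hasDerivAt_pow 2 u) (by positivity)).congr_deriv
      (by field_simp; ring)).hasDerivWithinAt
  have hinj : InjOn (fun u : ℝ => c / u ^ 2) s := fun u hu v hv h => by
    have hu : 0 < u := hs0 hu
    have hv : 0 < v := hs0 hv
    simp only at h
    field_simp at h
    exact ((sq_eq_sq₀ hv.le hu.le).1 h).symm
  rw [lintegral_image_eq_lintegral_abs_deriv_mul hs hderiv hinj]
  refine setLIntegral_congr_fun hs fun u hu => ?_
  have hu : 0 < u := hs0 hu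
  rw [abs_neg, abs_of_pos (by positivity)]

end ChangeOfVariables

section CauchySchlomilch

variable {b : ℝ}

lemma image_sub_div_Ioi (hb : 0 < b) : (fun u : ℝ => u - b / u) '' Ioi 0 = univ := by
  refine eq_univ_of_forall fun w => ?_
  obtain ⟨s, hs0, hs⟩ : ∃ s : ℝ, 0 ≤ s ∧ s ^ 2 = w ^ 2 + 4 * b :=
    ⟨_, sqrt_nonneg _, sq_sqrt (by positivity)⟩
  have hws : 0 < w + s := by
    linarith [neg_abs_le w, abs_lt_of_sq_lt_sq (by linarith : w ^ 2 < s ^ 2) hs0]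
  refine ⟨(w + s) / 2, half_pos hws, ?_⟩
  field_simp
  linear_combination hs

lemma strictMonoOn_sub_div (hb : 0 ≤ b) : StrictMonoOn (fun u : ℝ => u - b / u) (Ioi 0) :=
  fun u hu v _ huv => by
    have : b / v ≤ b / u := div_le_div_of_nonneg_left hb hu huv.le
    simp only
    linarith

lemma lintegral_div_sq_mul_exp_neg_sub_div_sq (hb : 0 < b) :
    ∫⁻ u in Ioi 0, ENNReal.ofReal (b / u ^ 2) * ENNReal.ofReal (exp (-(u - b / u) ^ 2))
      = ∫⁻ u in Ioi 0, ENNReal.ofReal (exp (-(u - b / u) ^ 2)) := by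
  refine Eq.trans ?_
    (lintegral_Ioi_comp_const_div hb fun u => ENNReal.ofReal (exp (-(u - b / u) ^ 2)))
  congr! 4 with u
  rw [div_div_cancel₀ hb.ne', ← neg_sub, neg_sq]

/-- `w = u - b / u` maps `(0, ∞)` onto `ℝ` with Jacobian `1 + b / u²`, and the two halves of the
Jacobian contribute equally. -/
lemma lintegral_exp_neg_sub_div_sq (hb : 0 < b) :
    ∫⁻ u in Ioi 0, ENNReal.ofReal (exp (-(u - b / u) ^ 2)) = ENNReal.ofReal (√π / 2) := by
  have hderiv : ∀ u ∈ Ioi (0 : ℝ),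
      HasDerivWithinAt (fun u => u - b / u) (1 + b / u ^ 2) (Ioi 0) u := fun u hu =>
    (((hasDerivAt_id' u).sub ((hasDerivAt_const u b).fun_div (hasDerivAt_id' u)
      (ne_of_gt hu))).congr_deriv (by ring)).hasDerivWithinAt
  have hsubst := lintegral_image_eq_lintegral_abs_deriv_mul measurableSet_Ioi hderiv
    (strictMonoOn_sub_div hb.le).injOn fun w => ENNReal.ofReal (exp (-w ^ 2))
  rw [image_sub_div_Ioi hb, Measure.restrict_univ, lintegral_exp_neg_sq] at hsubst
  have hsum : (∫⁻ u in Ioi 0, ENNReal.ofReal (exp (-(u - b / u) ^ 2)))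
      + ∫⁻ u in Ioi 0, ENNReal.ofReal (exp (-(u - b / u) ^ 2)) = ENNReal.ofReal √π := by
    rw [hsubst]
    nth_rw 2 [← lintegral_div_sq_mul_exp_neg_sub_div_sq hb]
    rw [← lintegral_add_left (by fun_prop)]
    refine setLIntegral_congr_fun measurableSet_Ioi fun u (hu : 0 < u) => ?_
    rw [abs_of_pos (by positivity), ENNReal.ofReal_add zero_le_one (by positivity),
      ENNReal.ofReal_one, add_mul, one_mul]
  rw [← ENNReal.mul_right_inj two_ne_zero ENNReal.ofNat_ne_top, two_mul, hsum, two_mul,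
    ← ENNReal.ofReal_add (by positivity) (by positivity), add_halves]

end CauchySchlomilch

lemma exp_neg_sq_mul_exp_neg_div_sq {u : ℝ} (hu : u ≠ 0) (b : ℝ) :
    exp (-u ^ 2) * exp (-(b ^ 2 / u ^ 2)) = exp (-(2 * b)) * exp (-(u - b / u) ^ 2) := by
  rw [← exp_add, ← exp_add]
  congr 1
  field_simp
  ring

/-- The Lévy density with `erfc (a / √t)` as CDF on `(0, ∞)`; the first-passage time to `0` from
`L` of a Brownian motion with generator `D d²/dx²` has it with `a = L / √(4D)`. -/
noncomputable def levyPDFReal (a t : ℝ) : ℝ :=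
  a / (√π * (t * √t)) * exp (-(a ^ 2 / t))

noncomputable def levyMeasure (a : ℝ) : Measure ℝ :=
  (volume.restrict (Ioi 0)).withDensity fun t => ENNReal.ofReal (levyPDFReal a t)

section Levy

variable {a : ℝ}

lemma measurable_levyPDFReal (a : ℝ) : Measurable (levyPDFReal a) := by
  unfold levyPDFReal
  fun_prop

lemma levyPDFReal_sq_div_sq (ha : 0 < a) {u : ℝ} (hu : 0 < u) :
    2 * a ^ 2 / u ^ 3 * levyPDFReal a (a ^ 2 / u ^ 2) = 2 / √π * exp (-u ^ 2) := by
  have hsqrt : √(a ^ 2 / u ^ 2) = a / u := by rw [← div_pow, sqrt_sq (by positivity)]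
  have hdiv : a ^ 2 / (a ^ 2 / u ^ 2) = u ^ 2 := by field_simp
  rw [levyPDFReal, hsqrt, hdiv]
  field_simp

lemma lintegral_levyMeasure {g : ℝ → ℝ≥0∞} (hg : Measurable g) :
    ∫⁻ t, g t ∂levyMeasure a = ∫⁻ t in Ioi 0, ENNReal.ofReal (levyPDFReal a t) * g t :=
  lintegral_withDensity_eq_lintegral_mul _ (measurable_levyPDFReal a).ennreal_ofReal hg

lemma ae_levyMeasure_pos : ∀ᵐ t ∂levyMeasure a, 0 < t :=
  (withDensity_absolutelyContinuous _ _).ae_le (ae_restrict_mem measurableSet_Ioi)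

lemma setLIntegral_image_levyPDFReal (ha : 0 < a) {s : Set ℝ} (hs : MeasurableSet s)
    (hs0 : s ⊆ Ioi 0) (g : ℝ → ℝ≥0∞) :
    ∫⁻ t in (fun u => a ^ 2 / u ^ 2) '' s, ENNReal.ofReal (levyPDFReal a t) * g t
      = ∫⁻ u in s, ENNReal.ofReal (2 / √π * exp (-u ^ 2)) * g (a ^ 2 / u ^ 2) := by
  rw [lintegral_image_const_div_sq (by positivity) hs hs0]
  refine setLIntegral_congr_fun hs fun u hu => ?_
  have hu : 0 < u := hs0 hu
  rw [← mul_assoc, ← ENNReal.ofReal_mul (by positivity), levyPDFReal_sq_div_sq ha hu]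

lemma levyMeasure_Iic (ha : 0 < a) {t : ℝ} (ht : 0 < t) :
    levyMeasure a (Iic t) = ENNReal.ofReal (erfc (a / √t)) := by
  have hr : 0 < a / √t := by positivity
  have hIoc : (fun u : ℝ => a ^ 2 / u ^ 2) '' Ici (a / √t) = Ioc 0 t := by
    rw [image_const_div_sq_Ici (by positivity) hr, div_pow, sq_sqrt ht.le]
    field_simp
  have h := setLIntegral_image_levyPDFReal ha measurableSet_Ici (Ici_subset_Ioi.2 hr) 1
  simp only [Pi.one_apply, mul_one, hIoc] at h
  rw [levyMeasure, withDensity_apply _ measurableSet_Iic,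
    Measure.restrict_restrict measurableSet_Iic, inter_comm, Ioi_inter_Iic, h, ofReal_erfc]

lemma lintegral_levyMeasure_exp (ha : 0 < a) {l : ℝ} (hl : 0 < l) :
    ∫⁻ t, ENNReal.ofReal (exp (-(l * t))) ∂levyMeasure a
      = ENNReal.ofReal (exp (-(2 * (a * √l)))) := by
  have hb : 0 < a * √l := by positivity
  have hpt : ∀ u ∈ Ioi (0 : ℝ),
      ENNReal.ofReal (2 / √π * exp (-u ^ 2)) * ENNReal.ofReal (exp (-(l * (a ^ 2 / u ^ 2))))
        = ENNReal.ofReal (2 / √π * exp (-(2 * (a * √l))))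
          * ENNReal.ofReal (exp (-(u - a * √l / u) ^ 2)) := fun u (hu : 0 < u) => by
    rw [← ENNReal.ofReal_mul (by positivity), ← ENNReal.ofReal_mul (by positivity), mul_assoc,
      mul_assoc, ← exp_neg_sq_mul_exp_neg_div_sq hu.ne', mul_pow, sq_sqrt hl.le, mul_div_assoc',
      mul_comm l]
  rw [lintegral_levyMeasure (by fun_prop), ← image_const_div_sq_Ioi (c := a ^ 2) (by positivity),
    setLIntegral_image_levyPDFReal ha measurableSet_Ioi subset_rfl,
    setLIntegral_congr_fun measurableSet_Ioi hpt, lintegral_const_mul _ (by fun_prop),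
    lintegral_exp_neg_sub_div_sq hb, ← ENNReal.ofReal_mul (by positivity)]
  congr 1
  field_simp

lemma lintegral_levyMeasure_mul_exp (ha : 0 < a) {l : ℝ} (hl : 0 < l) :
    ∫⁻ t, ENNReal.ofReal t * ENNReal.ofReal (exp (-(l * t))) ∂levyMeasure a
      = ENNReal.ofReal (a / √l * exp (-(2 * (a * √l)))) := by
  set b := a * √l
  have hb : 0 < b := by positivity
  have hpt : ∀ u ∈ Ioi (0 : ℝ),
      ENNReal.ofReal (2 / √π * exp (-u ^ 2)) *
          (ENNReal.ofReal (a ^ 2 / u ^ 2) * ENNReal.ofReal (exp (-(l * (a ^ 2 / u ^ 2)))))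
        = ENNReal.ofReal (a / √l * (2 / √π * exp (-(2 * b))))
          * (ENNReal.ofReal (b / u ^ 2) * ENNReal.ofReal (exp (-(u - b / u) ^ 2))) :=
    fun u (hu : 0 < u) => by
    rw [← ENNReal.ofReal_mul (by positivity), ← ENNReal.ofReal_mul (by positivity),
      ← ENNReal.ofReal_mul (by positivity), ← ENNReal.ofReal_mul (by positivity)]
    congr 1
    have hbl : l * (a ^ 2 / u ^ 2) = b ^ 2 / u ^ 2 := by
      rw [mul_pow, sq_sqrt hl.le]
      ring
    calc 2 / √π * exp (-u ^ 2) * (a ^ 2 / u ^ 2 * exp (-(l * (a ^ 2 / u ^ 2))))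
        = 2 / √π * (a ^ 2 / u ^ 2) * (exp (-u ^ 2) * exp (-(b ^ 2 / u ^ 2))) := by
          rw [hbl]; ring
      _ = 2 / √π * (a ^ 2 / u ^ 2) * (exp (-(2 * b)) * exp (-(u - b / u) ^ 2)) := by
          rw [exp_neg_sq_mul_exp_neg_div_sq hu.ne']
      _ = _ := by simp only [b]; field_simp
  rw [lintegral_levyMeasure (by fun_prop), ← image_const_div_sq_Ioi (c := a ^ 2) (by positivity),
    setLIntegral_image_levyPDFReal ha measurableSet_Ioi subset_rfl,
    setLIntegral_congr_fun measurableSet_Ioi hpt, lintegral_const_mul _ (by fun_prop),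
    lintegral_div_sq_mul_exp_neg_sub_div_sq hb, lintegral_exp_neg_sub_div_sq hb,
    ← ENNReal.ofReal_mul (by positivity)]
  congr 1
  field_simp

end Levy

lemma expMeasure_Ioi_s16 {l t : ℝ} (hl : 0 < l) (ht : 0 ≤ t) :
    expMeasure l (Ioi t) = ENNReal.ofReal (exp (-(l * t))) := by
  have := isProbabilityMeasure_expMeasure hl
  have hcdf : 0 ≤ 1 - exp (-(l * t)) := sub_nonneg.2 (exp_le_one_iff.2 (by nlinarith))
  rw [← compl_Iic, prob_compl_eq_one_sub measurableSet_Iic, ← ofReal_cdf, cdf_expMeasure_eq hl,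
    if_pos ht, ← ENNReal.ofReal_one, ← ENNReal.ofReal_sub _ hcdf, sub_sub_cancel]

lemma setLIntegral_lt_eq_lintegral_mul_measure_Ioi {Ω : Type*} {mΩ : MeasurableSpace Ω}
    {μ : Measure Ω} [IsFiniteMeasure μ] {X Y : Ω → ℝ} (hX : Measurable X) (hY : Measurable Y)
    (hXY : IndepFun X Y μ) {f : ℝ → ℝ≥0∞} (hf : Measurable f) :
    ∫⁻ ω in {ω | X ω < Y ω}, f (X ω) ∂μ = ∫⁻ t, f t * μ.map Y (Ioi t) ∂μ.map X := by
  have hS : MeasurableSet {p : ℝ × ℝ | p.1 < p.2} := measurableSet_lt measurable_fst measurable_snd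
  have hfS : Measurable ({p : ℝ × ℝ | p.1 < p.2}.indicator fun p => f p.1) :=
    (hf.comp measurable_fst).indicator hS
  calc ∫⁻ ω in {ω | X ω < Y ω}, f (X ω) ∂μ
      = ∫⁻ p in {p : ℝ × ℝ | p.1 < p.2}, f p.1 ∂μ.map fun ω => (X ω, Y ω) :=
        (setLIntegral_map hS (hf.comp measurable_fst) (hX.prodMk hY)).symm
    _ = ∫⁻ t, ∫⁻ s, {p : ℝ × ℝ | p.1 < p.2}.indicator (fun p => f p.1) (t, s) ∂μ.map Y
          ∂μ.map X := by
        rw [(indepFun_iff_map_prod_eq_prod_map_map hX.aemeasurable hY.aemeasurable).1 hXY,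
          ← lintegral_indicator hS, lintegral_prod _ hfS.aemeasurable]
    _ = ∫⁻ t, f t * μ.map Y (Ioi t) ∂μ.map X := by
        refine lintegral_congr fun t => ?_
        rw [← lintegral_indicator_const measurableSet_Ioi]
        rfl

lemma map_eq_levyMeasure_of_cdf {Ω : Type*} {mΩ : MeasurableSpace Ω} {μ : Measure Ω}
    [IsFiniteMeasure μ] {X : Ω → ℝ} (hX : Measurable X) {a : ℝ} (ha : 0 < a)
    (hcdf : ∀ t, 0 < t → (μ {ω | X ω ≤ t}).toReal = erfc (a / √t)) :
    μ.map X = levyMeasure a := by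
  have hIic : ∀ t, 0 < t → μ.map X (Iic t) = ENNReal.ofReal (erfc (a / √t)) := fun t ht => by
    rw [Measure.map_apply hX measurableSet_Iic, ← hcdf t ht,
      ENNReal.ofReal_toReal (measure_ne_top _ _)]
    rfl
  -- the mass of `Iic 0` is at most `erfc z` for every `z > 0`, taking `t = (a / z)²`
  have hzero : μ.map X (Iic 0) = 0 := by
    have hlim : Tendsto (fun z => ENNReal.ofReal (erfc z)) atTop (𝓝 0) := by
      simpa using ENNReal.tendsto_ofReal tendsto_erfc_atTop
    refine le_antisymm (ge_of_tendsto hlim ((eventually_gt_atTop 0).mono fun z hz => ?_)) zero_le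
    have ht : 0 < (a / z) ^ 2 := by positivity
    rw [← div_div_cancel₀ ha.ne' (b := z), ← sqrt_sq (div_pos ha hz).le, ← hIic _ ht]
    exact measure_mono (Iic_subset_Iic.2 ht.le)
  refine Measure.ext_of_Iic _ _ fun t => ?_
  rcases lt_or_ge 0 t with ht | ht
  · rw [hIic t ht, levyMeasure_Iic ha ht]
  · rw [measure_mono_null (Iic_subset_Iic.2 ht) hzero]
    exact (measure_mono_null (fun s (hs : s ≤ t) => not_lt.2 (hs.trans ht))
      (ae_iff.1 ae_levyMeasure_pos)).symm

theorem setIntegral_lt_div_measure_lt_of_levyMeasure_of_expMeasure {Ω : Type*}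
    {mΩ : MeasurableSpace Ω} {μ : Measure Ω} [IsFiniteMeasure μ] {X Y : Ω → ℝ}
    (hX : Measurable X) (hY : Measurable Y) (hXY : IndepFun X Y μ) {a l : ℝ} (ha : 0 < a)
    (hl : 0 < l) (hXlaw : μ.map X = levyMeasure a) (hYlaw : μ.map Y = expMeasure l) :
    (∫ ω in {ω | X ω < Y ω}, X ω ∂μ) / (μ {ω | X ω < Y ω}).toReal = a / √l := by
  have hkey : ∀ f : ℝ → ℝ≥0∞, Measurable f → ∫⁻ ω in {ω | X ω < Y ω}, f (X ω) ∂μ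
      = ∫⁻ t, f t * ENNReal.ofReal (exp (-(l * t))) ∂levyMeasure a := fun f hf => by
    rw [setLIntegral_lt_eq_lintegral_mul_measure_Ioi hX hY hXY hf, hXlaw, hYlaw]
    exact lintegral_congr_ae (ae_levyMeasure_pos.mono fun t ht => by
      simp only [expMeasure_Ioi_s16 hl ht.le])
  have hden : μ {ω | X ω < Y ω} = ENNReal.ofReal (exp (-(2 * (a * √l)))) := by
    simpa [← lintegral_levyMeasure_exp ha hl] using hkey 1 measurable_const
  have hX0 : ∀ᵐ ω ∂μ, 0 < X ω := ae_of_ae_map hX.aemeasurable (hXlaw ▸ ae_levyMeasure_pos)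
  have hnum : ∫ ω in {ω | X ω < Y ω}, X ω ∂μ = a / √l * exp (-(2 * (a * √l))) := by
    rw [integral_eq_lintegral_of_nonneg_ae (ae_restrict_of_ae (hX0.mono fun _ h => h.le))
      hX.aestronglyMeasurable.restrict, hkey _ ENNReal.measurable_ofReal,
      lintegral_levyMeasure_mul_exp ha hl, ENNReal.toReal_ofReal (by positivity)]
  rw [hnum, hden, ENNReal.toReal_ofReal (exp_pos _).le, mul_div_cancel_right₀ _ (exp_pos _).ne']

/-- For 1D Brownian motion with diffusivity `D` started at `L > 0` with a perfectly
absorbing target at `0`, the FPT `τ` has CDF `F(t) = erfc(L/√(4Dt))`, and for an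
independent exponential inactivation time `σ` with rate `λ`,
`E[τ | τ < σ] = L/(2√(Dλ))` exactly, for every `λ > 0`. -/
theorem exact_conditional_mean_one_dimensional
    (Ω : Type*) [MeasureSpace Ω] [IsProbabilityMeasure (ℙ : Measure Ω)]
    (D L : ℝ) (hD : 0 < D) (hL : 0 < L)
    (τ : Ω → ℝ) (hτ : Measurable τ)
    (hcdf : ∀ t : ℝ, 0 < t →
      (ℙ {ω | τ ω ≤ t}).toReal = erfc (L / Real.sqrt (4 * D * t)))
    (σ : ℝ → Ω → ℝ) (hσm : ∀ l, Measurable (σ l))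
    (hσ : ∀ l, 0 < l → Measure.map (σ l) ℙ = expMeasure l)
    (hind : ∀ l, 0 < l → IndepFun τ (σ l) ℙ) :
    ∀ l : ℝ, 0 < l →
      (∫ ω in {ω | τ ω < σ l ω}, τ ω) / (ℙ {ω | τ ω < σ l ω}).toReal
        = L / (2 * Real.sqrt (D * l)) := by
  intro l hl
  have hsqrt : ∀ t, 0 < t → L / √(4 * D * t) = L / (2 * √D) / √t := fun t ht => by
    rw [sqrt_mul (by positivity), sqrt_mul (by norm_num), div_div,
      (sqrt_eq_iff_mul_self_eq_of_pos two_pos).2 (by norm_num : (2 : ℝ) * 2 = 4)]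
  have hlaw : (ℙ : Measure Ω).map τ = levyMeasure (L / (2 * √D)) :=
    map_eq_levyMeasure_of_cdf hτ (by positivity) fun t ht => by rw [hcdf t ht, hsqrt t ht]
  rw [setIntegral_lt_div_measure_lt_of_levyMeasure_of_expMeasure hτ (hσm l) (hind l hl)
    (by positivity) hl hlaw (hσ l hl), sqrt_mul hD.le, div_div, mul_assoc]
end
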